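/- arXiv:1712.06099 — 7 statements merged into one kernel-verified Lean document; each statement's English description precedes it below -/
import Mathlib

section
/- For every integer d ≥ 1 there exists an integer n ≥ 2 such that the local dimension of the poset Core(n,d) is at least d. That is, every local realizer 𝓛 of Core(n,d) contains some element u belonging to at least d of the partial linear extensions in 𝓛. -/
/-- A partial linear extension (ple) of a poset `α`: a set `dom` together with a
linear order `rel` on `dom` extending the restriction of the partial order to `dom`. -/
structure PLE (α : Type*) [PartialOrder α] where
  dom : Set α
  rel : α → α → Prop
  refl : ∀ x ∈ dom, rel x x
  antisymm : ∀ x ∈ dom, ∀ y ∈ dom, rel x y → rel y x → x = y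
  trans : ∀ x ∈ dom, ∀ y ∈ dom, ∀ z ∈ dom, rel x y → rel y z → rel x z
  total : ∀ x ∈ dom, ∀ y ∈ dom, rel x y ∨ rel y x
  extends_le : ∀ x ∈ dom, ∀ y ∈ dom, x ≤ y → rel x y

/-- `μ(u, 𝓛)`: the number of members of the family `𝓛` whose domain contains `u`. -/
noncomputable def mu {α : Type*} [PartialOrder α] {m : ℕ} (L : Fin m → PLE α) (u : α) : ℕ :=
  Set.ncard {i : Fin m | u ∈ (L i).dom}

/-- A family of ple's is a local realizer when every strict comparability is witnessed
and every incomparable pair is reversed by some member. -/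
def IsLocalRealizer {α : Type*} [PartialOrder α] {m : ℕ} (L : Fin m → PLE α) : Prop :=
  (∀ x y : α, x < y → ∃ i, x ∈ (L i).dom ∧ y ∈ (L i).dom ∧ (L i).rel x y) ∧
  (∀ x y : α, ¬ x ≤ y → ¬ y ≤ x → ∃ i, x ∈ (L i).dom ∧ y ∈ (L i).dom ∧ (L i).rel y x)

/-- The local dimension: the least positive `d` admitting a local realizer `𝓛`
with `μ(u,𝓛) ≤ d` for every `u`. -/
noncomputable def localDim (α : Type*) [PartialOrder α] : ℕ :=
  sInf {d : ℕ | 0 < d ∧ ∃ m : ℕ, ∃ L : Fin m → PLE α,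
    IsLocalRealizer L ∧ ∀ u : α, mu L u ≤ d}


/-- Elements of `Core(n,d)` (0-based indices): `mn g` encodes the minimal element
`(a_{g 0}, …, a_{g (d-1)})`; `mx k p j` encodes the maximal element
`(a_{p 0}, …, a_{p (k-1)}, b j)`, whose prefix of `a`'s has length `k ≤ d - 1`. -/
inductive CElt (n d : ℕ) : Type
  | mn : (Fin d → Fin n) → CElt n d
  | mx : (k : Fin d) → (Fin k.val → Fin n) → Fin n → CElt n d

/-- The strict comparabilities of `Core(n,d)`:
`(a_{i_1},…,a_{i_d}) < (a_{i'_1},…,a_{i'_{k-1}}, b_j)` iff the prefixes agree and `i_k ≠ j`. -/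
def cltC {n d : ℕ} : CElt n d → CElt n d → Prop
  | .mn g, .mx k p j =>
      (∀ m : Fin k.val, g ⟨m.val, by have := m.isLt; have := k.isLt; omega⟩ = p m) ∧
        g ⟨k.val, k.isLt⟩ ≠ j
  | _, _ => False

instance (n d : ℕ) : PartialOrder (CElt n d) where
  le x y := x = y ∨ cltC x y
  le_refl x := Or.inl rfl
  le_trans := by
    intro x y z hxy hyz
    rcases hxy with rfl | h
    · exact hyz
    · rcases hyz with rfl | h'
      · exact Or.inr h
      · exfalso
        cases x <;> cases y <;> cases z <;> simp [cltC] at h h' ⊢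
  le_antisymm := by
    intro x y hxy hyx
    rcases hxy with rfl | h
    · rfl
    · rcases hyx with h' | h'
      · exact h'.symm
      · exfalso
        cases x <;> cases y <;> simp [cltC] at h h' ⊢


section CoreAux

variable {n d : ℕ}

/-- The prefix of length `k` of a minimal-element index function. -/
def CPre (g : Fin d → Fin n) (k : Fin d) : Fin k.val → Fin n :=
  fun m => g ⟨m.val, lt_trans m.isLt k.isLt⟩

/-- The maximal element `M_k(g)` incomparable to `mn g` at level `k`. -/
def CMx (g : Fin d → Fin n) (k : Fin d) : CElt n d :=
  CElt.mx k (CPre g k) (g k)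

lemma cle_iff (x y : CElt n d) : x ≤ y ↔ (x = y ∨ cltC x y) := Iff.rfl

lemma mn_le_mx (g : Fin d → Fin n) (k : Fin d) (p : Fin k.val → Fin n) (j : Fin n)
    (hp : ∀ m : Fin k.val, g ⟨m.val, lt_trans m.isLt k.isLt⟩ = p m) (hj : g k ≠ j) :
    (CElt.mn g : CElt n d) ≤ CElt.mx k p j := by
  refine Or.inr ⟨fun m => hp m, ?_⟩
  simpa using hj

lemma mn_not_le_CMx (g : Fin d → Fin n) (k : Fin d) :
    ¬ ((CElt.mn g : CElt n d) ≤ CMx g k) := by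
  intro h
  rcases (cle_iff _ _).mp h with h | h
  · exact absurd h (by simp [CMx])
  · exact h.2 (by simp)

lemma CMx_not_le_mn (g : Fin d → Fin n) (k : Fin d) :
    ¬ (CMx g k ≤ (CElt.mn g : CElt n d)) := by
  intro h
  rcases (cle_iff _ _).mp h with h | h
  · exact absurd h (by simp [CMx])
  · exact h

end CoreAux

/-- Local dimension of `Core(n,d)` is at least `d` for suitably large `n`:
every local realizer contains an element appearing in at least `d` of its ple's. -/
theorem localDim_core_unbounded :
    ∀ d : ℕ, 1 ≤ d → ∃ n : ℕ, 2 ≤ n ∧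
      ∀ (m : ℕ) (L : Fin m → PLE (CElt n d)), IsLocalRealizer L →
        ∃ u : CElt n d, d ≤ mu L u := by
  intro d hd
  obtain ⟨n, hn⟩ : ∃ n, n = (d-1)*(d-1) + 2 := ⟨_, rfl⟩
  refine ⟨n, by omega, ?_⟩
  intro m L hL
  by_contra hcon
  push_neg at hcon
  classical
  have muEq : ∀ u : CElt n d, mu L u = (Finset.univ.filter (fun i => u ∈ (L i).dom)).card := by
    intro u
    rw [mu, ← Set.toFinset_setOf, ← Set.ncard_eq_toFinset_card']
  have hrev : ∀ (g : Fin d → Fin n) (k : Fin d),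
      ∃ i, CElt.mn g ∈ (L i).dom ∧ CMx g k ∈ (L i).dom ∧ (L i).rel (CMx g k) (CElt.mn g) :=
    fun g k => hL.2 (CElt.mn g) (CMx g k) (mn_not_le_CMx g k) (CMx_not_le_mn g k)
  choose r hr1 hr2 hr3 using hrev
  -- Lemma A: two minimal elements with the same prefix below level `k` but different
  -- values at `k` cannot have the same reversing ple at level `k`.
  have lemA : ∀ (k : Fin d) (g h : Fin d → Fin n),
      (∀ m' : Fin d, m'.val < k.val → g m' = h m') → g k ≠ h k → r g k ≠ r h k := by
    intro k g h hpre hky hreq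
    have d1 := hr1 g k
    have d2 := hr2 g k
    have t1 := hr3 g k
    have d1' := hr1 h k
    have d2' := hr2 h k
    have t2 := hr3 h k
    rw [← hreq] at d1' d2' t2
    have hgh : (CElt.mn g : CElt n d) ≤ CMx h k := by
      refine mn_le_mx g k (CPre h k) (h k) (fun m' => hpre _ m'.isLt) hky
    have hhg : (CElt.mn h : CElt n d) ≤ CMx g k := by
      refine mn_le_mx h k (CPre g k) (g k) (fun m' => (hpre _ m'.isLt).symm) (Ne.symm hky)
    have e1 : (L (r g k)).rel (CElt.mn g) (CMx h k) := (L (r g k)).extends_le _ d1 _ d2' hgh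
    have e2 : (L (r g k)).rel (CElt.mn h) (CMx g k) := (L (r g k)).extends_le _ d1' _ d2 hhg
    have c1 : (L (r g k)).rel (CElt.mn g) (CElt.mn h) := (L (r g k)).trans _ d1 _ d2' _ d1' e1 t2
    have c2 : (L (r g k)).rel (CElt.mn h) (CElt.mn g) := (L (r g k)).trans _ d1' _ d2 _ d1 e2 t1
    have hmn : (CElt.mn g : CElt n d) = CElt.mn h := (L (r g k)).antisymm _ d1 _ d1' c1 c2
    have : g = h := by injection hmn
    exact hky (by rw [this])
  -- the set of ples used as level-`l` reversal witnesses by minimal elements in the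
  -- class determined by the first `l+1` coordinates of `w`
  set SSN : ℕ → (Fin d → Fin n) → Finset (Fin m) := fun l w =>
    Finset.univ.filter (fun i => ∃ hl : l < d, ∃ g : Fin d → Fin n,
      (∀ m' : Fin d, m'.val ≤ l → g m' = w m') ∧ r g ⟨l, hl⟩ = i) with hSSN
  have SScongr : ∀ (l : ℕ) (w w' : Fin d → Fin n),
      (∀ m' : Fin d, m'.val ≤ l → w m' = w' m') → SSN l w = SSN l w' := by
    intro l w w' hww
    ext i
    simp only [hSSN, Finset.mem_filter, Finset.mem_univ, true_and]
    constructor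
    · rintro ⟨hl, g, hg, hgi⟩
      exact ⟨hl, g, fun m' hm' => (hg m' hm').trans (hww m' hm'), hgi⟩
    · rintro ⟨hl, g, hg, hgi⟩
      exact ⟨hl, g, fun m' hm' => (hg m' hm').trans (hww m' hm').symm, hgi⟩
  have SScard : ∀ (l : ℕ) (w : Fin d → Fin n), (SSN l w).card ≤ d - 1 := by
    intro l w
    by_cases hl : l < d
    · have hsub : SSN l w ⊆ Finset.univ.filter (fun i => CMx w ⟨l, hl⟩ ∈ (L i).dom) := by
        intro i hi
        simp only [hSSN, Finset.mem_filter, Finset.mem_univ, true_and] at hi ⊢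
        obtain ⟨hl', g, hg, hgi⟩ := hi
        have hp : CPre g ⟨l, hl'⟩ = CPre w ⟨l, hl⟩ := by
          funext m'
          exact hg ⟨m'.val, lt_trans m'.isLt hl'⟩ (le_of_lt m'.isLt)
        have hv : g ⟨l, hl'⟩ = w ⟨l, hl⟩ := hg ⟨l, hl'⟩ le_rfl
        have hM : CMx g ⟨l, hl'⟩ = CMx w ⟨l, hl⟩ := by
          simp only [CMx]
          rw [hp, hv]
        rw [← hM, ← hgi]
        exact hr2 g ⟨l, hl'⟩
      have h1 := Finset.card_le_card hsub
      have hmu := hcon (CMx w ⟨l, hl⟩)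
      rw [muEq] at hmu
      omega
    · have he : SSN l w = ∅ := by
        ext i
        simp only [hSSN, Finset.mem_filter, Finset.mem_univ, true_and, Finset.notMem_empty,
          iff_false, not_exists]
        intro hl'
        exact absurd hl' hl
      simp [he]
  have SSdisj : ∀ (l : ℕ) (w w' : Fin d → Fin n),
      (∀ m' : Fin d, m'.val < l → w m' = w' m') →
      (∀ hl : l < d, w ⟨l, hl⟩ ≠ w' ⟨l, hl⟩) →
      Disjoint (SSN l w) (SSN l w') := by
    intro l w w' hagree hne
    rw [Finset.disjoint_left]
    intro i hi hi'
    simp only [hSSN, Finset.mem_filter, Finset.mem_univ, true_and] at hi hi'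
    obtain ⟨hl, g, hg, hgi⟩ := hi
    obtain ⟨hl', g', hg', hgi'⟩ := hi'
    refine lemA ⟨l, hl⟩ g g' ?_ ?_ (hgi.trans hgi'.symm)
    · intro m' hm'
      rw [hg m' (le_of_lt hm'), hg' m' (le_of_lt hm')]
      exact hagree m' hm'
    · rw [hg ⟨l, hl⟩ le_rfl, hg' ⟨l, hl⟩ le_rfl]
      exact hne hl
  have SSmem : ∀ (l : ℕ) (hl : l < d) (g : Fin d → Fin n), r g ⟨l, hl⟩ ∈ SSN l g := by
    intro l hl g
    simp only [hSSN, Finset.mem_filter, Finset.mem_univ, true_and]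
    exact ⟨hl, g, fun _ _ => rfl, rfl⟩
  -- greedily build a prefix whose level sets are pairwise disjoint
  have build : ∀ k : ℕ, k ≤ d - 1 → ∃ w : Fin d → Fin n,
      ∀ l l' : ℕ, l < l' → l' < k → Disjoint (SSN l w) (SSN l' w) := by
    intro k
    induction k with
    | zero =>
      intro _
      exact ⟨fun _ => ⟨0, by omega⟩, fun l l' _ h => absurd h (Nat.not_lt_zero _)⟩
    | succ k ih =>
      intro hk1
      obtain ⟨w, hw⟩ := ih (by omega)
      have hkd : k < d := by omega
      set U : Finset (Fin m) := (Finset.range k).biUnion (fun l => SSN l w) with hU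
      set bad : Finset (Fin n) := U.biUnion (fun i =>
        Finset.univ.filter (fun j => i ∈ SSN k (Function.update w ⟨k, hkd⟩ j))) with hbad
      have hUcard : U.card ≤ k * (d-1) := by
        calc U.card ≤ ∑ l ∈ Finset.range k, (SSN l w).card := Finset.card_biUnion_le
        _ ≤ ∑ _l ∈ Finset.range k, (d-1) := Finset.sum_le_sum (fun l _ => SScard l w)
        _ = k * (d-1) := by rw [Finset.sum_const, Finset.card_range, smul_eq_mul]
      have hone : ∀ i : Fin m,
          (Finset.univ.filter (fun j => i ∈ SSN k (Function.update w ⟨k, hkd⟩ j))).card ≤ 1 := by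
        intro i
        refine Finset.card_le_one.mpr ?_
        intro j hj j' hj'
        simp only [Finset.mem_filter, Finset.mem_univ, true_and] at hj hj'
        by_contra hne
        have hdisj := SSdisj k (Function.update w ⟨k, hkd⟩ j) (Function.update w ⟨k, hkd⟩ j')
          (fun m' hm' => by
            have hne1 : m' ≠ ⟨k, hkd⟩ := by
              intro hEq
              rw [hEq] at hm'
              exact absurd hm' (lt_irrefl _)
            rw [Function.update_of_ne hne1, Function.update_of_ne hne1])
          (fun hl => by
            have hidx : (⟨k, hl⟩ : Fin d) = ⟨k, hkd⟩ := rfl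
            rw [hidx, Function.update_self, Function.update_self]
            exact hne)
        exact (Finset.disjoint_left.mp hdisj hj) hj'
      have hbadcard : bad.card ≤ k * (d-1) := by
        calc bad.card ≤ ∑ i ∈ U,
            (Finset.univ.filter (fun j => i ∈ SSN k (Function.update w ⟨k, hkd⟩ j))).card :=
          Finset.card_biUnion_le
        _ ≤ ∑ _i ∈ U, 1 := Finset.sum_le_sum (fun i _ => hone i)
        _ = U.card := by simp
        _ ≤ k * (d-1) := hUcard
      have hex : ∃ j : Fin n, j ∉ bad := by
        by_contra hall
        push_neg at hall
        have hge : (Finset.univ : Finset (Fin n)).card ≤ bad.card :=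
          Finset.card_le_card (fun j _ => hall j)
        rw [Finset.card_univ, Fintype.card_fin] at hge
        have hk2 : k ≤ d - 2 := by omega
        have hmul : k * (d-1) ≤ (d-1) * (d-1) :=
          Nat.mul_le_mul_right _ (by omega)
        omega
      obtain ⟨j, hj⟩ := hex
      refine ⟨Function.update w ⟨k, hkd⟩ j, ?_⟩
      have hcongr : ∀ l'' : ℕ, l'' < k → SSN l'' (Function.update w ⟨k, hkd⟩ j) = SSN l'' w := by
        intro l'' hl''
        apply SScongr
        intro m' hm'
        have hne1 : m' ≠ ⟨k, hkd⟩ := by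
          intro hEq
          rw [hEq] at hm'
          simp only at hm'
          omega
        exact Function.update_of_ne hne1 _ _
      intro l l' hll' hl'k
      rcases Nat.lt_or_ge l' k with h | h
      · rw [hcongr l (by omega), hcongr l' h]
        exact hw l l' hll' h
      · have hl'e : l' = k := by omega
        subst hl'e
        rw [hcongr l (by omega)]
        rw [Finset.disjoint_left]
        intro i hiU hiK
        apply hj
        rw [hbad]
        refine Finset.mem_biUnion.mpr ⟨i, ?_, ?_⟩
        · rw [hU]
          exact Finset.mem_biUnion.mpr ⟨l, Finset.mem_range.mpr (by omega), hiU⟩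
        · simp only [Finset.mem_filter, Finset.mem_univ, true_and]
          exact hiK
  obtain ⟨w, hw⟩ := build (d-1) le_rfl
  have hd1 : d - 1 < d := by omega
  set gj : Fin n → (Fin d → Fin n) := fun j => Function.update w ⟨d-1, hd1⟩ j with hgj
  set F : Fin n → Fin m := fun j => r (gj j) ⟨d-1, hd1⟩ with hF
  set U : Finset (Fin m) := (Finset.range (d-1)).biUnion (fun l => SSN l w) with hU
  have hgjcongr : ∀ (j : Fin n) (l : ℕ), l < d - 1 → SSN l (gj j) = SSN l w := by
    intro j l hl
    apply SScongr
    intro m' hm'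
    have hne1 : m' ≠ ⟨d-1, hd1⟩ := by
      intro hEq
      rw [hEq] at hm'
      simp only at hm'
      omega
    exact Function.update_of_ne hne1 _ _
  have hFU : ∀ j : Fin n, F j ∈ U := by
    intro j
    set Dg : Finset (Fin m) := Finset.univ.filter (fun i => CElt.mn (gj j) ∈ (L i).dom) with hDg
    have hDgcard : Dg.card ≤ d - 1 := by
      have h1 := hcon (CElt.mn (gj j))
      rw [muEq] at h1
      rw [hDg]
      omega
    have key : ∀ a b : Fin (d-1), a.val < b.val →
        r (gj j) ⟨a.val, by omega⟩ ≠ r (gj j) ⟨b.val, by omega⟩ := by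
      intro a b hab heq
      have m1 : r (gj j) ⟨a.val, by omega⟩ ∈ SSN a.val w := by
        rw [← hgjcongr j a.val a.isLt]
        exact SSmem a.val (by omega) (gj j)
      have m2 : r (gj j) ⟨b.val, by omega⟩ ∈ SSN b.val w := by
        rw [← hgjcongr j b.val b.isLt]
        exact SSmem b.val (by omega) (gj j)
      rw [← heq] at m2
      exact Finset.disjoint_left.mp (hw a.val b.val hab b.isLt) m1 m2
    have hinj : Function.Injective (fun l : Fin (d-1) => r (gj j) ⟨l.val, by omega⟩) := by
      intro a b hab
      by_contra hne
      rcases Nat.lt_or_ge a.val b.val with h | h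
      · exact key a b h hab
      · have h' : b.val < a.val := by
          rcases Nat.lt_or_ge b.val a.val with h2 | h2
          · exact h2
          · exact absurd (Fin.ext (le_antisymm h h2)).symm hne
        exact key b a h' hab.symm
    set A : Finset (Fin m) :=
      Finset.image (fun l : Fin (d-1) => r (gj j) ⟨l.val, by omega⟩) Finset.univ with hA
    have hAsub : A ⊆ Dg := by
      intro i hi
      simp only [hA, Finset.mem_image, Finset.mem_univ, true_and] at hi
      obtain ⟨l, hl⟩ := hi
      simp only [hDg, Finset.mem_filter, Finset.mem_univ, true_and]
      rw [← hl]
      exact hr1 (gj j) _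
    have hAcard : A.card = d - 1 := by
      rw [hA, Finset.card_image_of_injective _ hinj, Finset.card_univ, Fintype.card_fin]
    have hDgA : A = Dg := Finset.eq_of_subset_of_card_le hAsub (by omega)
    have hFDg : F j ∈ Dg := by
      simp only [hDg, Finset.mem_filter, Finset.mem_univ, true_and]
      exact hr1 (gj j) _
    rw [← hDgA] at hFDg
    simp only [hA, Finset.mem_image, Finset.mem_univ, true_and] at hFDg
    obtain ⟨l, hl⟩ := hFDg
    rw [hU]
    refine Finset.mem_biUnion.mpr ⟨l.val, Finset.mem_range.mpr l.isLt, ?_⟩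
    rw [← hgjcongr j l.val l.isLt, ← hl]
    exact SSmem l.val (by omega) (gj j)
  have hFinj : Function.Injective F := by
    intro j j' hjj'
    by_contra hne
    have hdisj := SSdisj (d-1) (gj j) (gj j')
      (fun m' hm' => by
        have hne1 : m' ≠ ⟨d-1, hd1⟩ := by
          intro hEq
          rw [hEq] at hm'
          simp only at hm'
          omega
        simp only [hgj]
        rw [Function.update_of_ne hne1, Function.update_of_ne hne1])
      (fun hl => by
        have hidx : (⟨d-1, hl⟩ : Fin d) = ⟨d-1, hd1⟩ := rfl
        simp only [hgj]
        rw [hidx, Function.update_self, Function.update_self]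
        exact hne)
    have m1 : F j ∈ SSN (d-1) (gj j) := SSmem _ hd1 _
    have m2 : F j' ∈ SSN (d-1) (gj j') := SSmem _ hd1 _
    rw [← hjj'] at m2
    exact Finset.disjoint_left.mp hdisj m1 m2
  have himg : Finset.image F Finset.univ ⊆ U := by
    intro i hi
    simp only [Finset.mem_image, Finset.mem_univ, true_and] at hi
    obtain ⟨j, hj⟩ := hi
    rw [← hj]
    exact hFU j
  have hcard : n ≤ U.card := by
    calc n = (Finset.univ : Finset (Fin n)).card := by rw [Finset.card_univ, Fintype.card_fin]
    _ = (Finset.image F Finset.univ).card := (Finset.card_image_of_injective _ hFinj).symm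
    _ ≤ U.card := Finset.card_le_card himg
  have hUcard : U.card ≤ (d-1) * (d-1) := by
    calc U.card ≤ ∑ l ∈ Finset.range (d-1), (SSN l w).card := Finset.card_biUnion_le
    _ ≤ ∑ _l ∈ Finset.range (d-1), (d-1) := Finset.sum_le_sum (fun l _ => SScard l w)
    _ = (d-1) * (d-1) := by rw [Finset.sum_const, Finset.card_range, smul_eq_mul]
  omega
end

section
/- Local dimension is unbounded on the class of finite posets of height 2: for every integer d ≥ 1 there exists a finite poset P in which every chain has at most 2 elements and whose local dimension is at least d. -/
/-!
A counting argument. For a Boolean matrix `B` on `Fin n × Fin n`, let `P_B` be the height-two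
poset on `Fin n ⊕ Fin n` with `inl i < inr j` iff `B i j`. A local realizer of `P_B` determines
`B`: `B i j` fails exactly when some member puts `inr j` below `inl i`. A family of ples with
`μ ≤ d` is in turn determined, as far as these placements go, by the code assigning to each
element the at most `d` pairs (index of a ple containing it, rank of the element in it); only the
at most `2n·d` nonempty ples need an index. So if all `P_B` had local dimension below `d`, the
`2 ^ (n * n)` matrices would inject into the at most `((4n²d + 1) ^ d) ^ (2n)` codes, which is
impossible for `n = 2 ^ (2d + 6)`.
-/

open Finset

namespace PLE

variable {α : Type*} [PartialOrder α]

def pair (x y : α) (h : ¬ y < x) : PLE α where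
  dom := {x, y}
  rel a b := a = b ∨ a = x ∧ b = y
  refl _ _ := Or.inl rfl
  antisymm := by rintro a - b - (rfl | ⟨rfl, rfl⟩) (h' | ⟨rfl, -⟩) <;> first | rfl | exact h'.symm
  trans := by rintro a - b - c - (rfl | ⟨rfl, rfl⟩) (rfl | ⟨rfl, rfl⟩) <;> simp
  total := by rintro a (rfl | rfl) b (rfl | rfl) <;> simp
  extends_le := by
    rintro a (rfl | rfl) b (rfl | rfl) hab
    · exact .inl rfl
    · exact .inr ⟨rfl, rfl⟩
    · exact .inl (hab.eq_of_not_lt h)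
    · exact .inl rfl

section rank

variable [Fintype α] (P : PLE α)

open Classical in
noncomputable def rank (x : α) : ℕ := #{y | y ∈ P.dom ∧ P.rel y x ∧ y ≠ x}

lemma rank_lt_card (x : α) : P.rank x < Fintype.card α :=
  card_lt_univ_of_notMem (x := x) (by simp)

lemma rank_lt_rank {x y : α} (hx : x ∈ P.dom) (hy : y ∈ P.dom) (hxy : P.rel x y) (hne : x ≠ y) :
    P.rank x < P.rank y := by
  classical
  refine card_lt_card ((ssubset_iff_of_subset ?_).2 ⟨x, by simp [hx, hxy, hne], by simp⟩)
  intro z hz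
  simp only [mem_filter, mem_univ, true_and] at hz ⊢
  obtain ⟨hz, hzx, hzne⟩ := hz
  refine ⟨hz, P.trans z hz x hx y hy hzx hxy, ?_⟩
  rintro rfl
  exact hne (P.antisymm x hx z hz hxy hzx)

lemma rel_iff_rank_le {x y : α} (hx : x ∈ P.dom) (hy : y ∈ P.dom) :
    P.rel x y ↔ P.rank x ≤ P.rank y := by
  refine ⟨fun h => ?_, fun h => ?_⟩
  · rcases eq_or_ne x y with rfl | hne
    · rfl
    · exact (P.rank_lt_rank hx hy h hne).le
  · by_contra hxy
    have hne : y ≠ x := by rintro rfl; exact hxy (P.refl y hy)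
    exact h.not_gt (P.rank_lt_rank hy hx ((P.total x hx y hy).resolve_left hxy) hne)

end rank

end PLE

section family

variable {α : Type*} [PartialOrder α] {m : ℕ} (L : Fin m → PLE α)

lemma mu_eq_card (u : α) [DecidablePred fun i => u ∈ (L i).dom] :
    mu L u = #{i | u ∈ (L i).dom} := by
  rw [mu, ← Set.ncard_coe_finset]
  simp

lemma mu_le (u : α) : mu L u ≤ m := by
  classical
  simpa [mu_eq_card] using card_filter_le (univ : Finset (Fin m)) (fun i => u ∈ (L i).dom)

lemma exists_isLocalRealizer [Finite α] : ∃ m, ∃ L : Fin m → PLE α, IsLocalRealizer L := by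
  classical
  have := Fintype.ofFinite α
  let e := Fintype.equivFin {p : α × α // ¬ p.2 < p.1}
  refine ⟨_, fun k => PLE.pair _ _ (e.symm k).2, fun x y hxy => ?_, fun x y hxy _ => ?_⟩
  · exact ⟨e ⟨(x, y), hxy.asymm⟩, by simp [PLE.pair]⟩
  · exact ⟨e ⟨(y, x), fun h => hxy h.le⟩, by simp [PLE.pair]⟩

lemma exists_isLocalRealizer_mu_le_localDim (α : Type*) [PartialOrder α] [Finite α] :
    ∃ m, ∃ L : Fin m → PLE α, IsLocalRealizer L ∧ ∀ u, mu L u ≤ localDim α := by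
  obtain ⟨m, L, hL⟩ := exists_isLocalRealizer (α := α)
  have hne : {d : ℕ | 0 < d ∧ ∃ m : ℕ, ∃ L : Fin m → PLE α,
      IsLocalRealizer L ∧ ∀ u, mu L u ≤ d}.Nonempty :=
    ⟨m + 1, m.succ_pos, m, L, hL, fun u => (mu_le L u).trans m.le_succ⟩
  exact (Nat.sInf_mem hne).2

def RealizedLE (x y : α) : Prop := ∃ i, x ∈ (L i).dom ∧ y ∈ (L i).dom ∧ (L i).rel x y

variable {L}

lemma not_realizedLE_of_lt {x y : α} (h : x < y) : ¬ RealizedLE L y x := by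
  rintro ⟨i, hy, hx, hyx⟩
  exact h.ne ((L i).antisymm x hx y hy ((L i).extends_le x hx y hy h.le) hyx)

lemma IsLocalRealizer.realizedLE_iff_not_lt (hL : IsLocalRealizer L) {x y : α} (hne : x ≠ y) :
    RealizedLE L y x ↔ ¬ x < y := by
  refine ⟨fun h hxy => not_realizedLE_of_lt hxy h, fun hxy => ?_⟩
  by_cases hyx : y ≤ x
  · exact hL.1 y x (hyx.lt_of_ne hne.symm)
  · obtain ⟨i, hx, hy, h⟩ := hL.2 x y (fun h => hxy (h.lt_of_ne hne)) hyx
    exact ⟨i, hy, hx, h⟩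

variable (L)

lemma card_filter_dom_nonempty_le [Fintype α] {d : ℕ} (hμ : ∀ u, mu L u ≤ d)
    [DecidablePred fun i => (L i).dom.Nonempty] :
    #{i | (L i).dom.Nonempty} ≤ Fintype.card α * d := by
  classical
  have h := card_mul_le_card_mul (fun i x => x ∈ (L i).dom) (m := 1)
    (s := {i | (L i).dom.Nonempty}) (t := univ) (n := d) ?_ ?_
  · simpa using h
  · intro i hi
    obtain ⟨x, hx⟩ := (mem_filter.1 hi).2
    exact card_pos.2 ⟨x, by simpa [bipartiteAbove] using hx⟩
  · intro x _
    refine (card_le_card fun i => ?_).trans ((mu_eq_card L x).symm.trans_le (hμ x))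
    simp only [bipartiteBelow, mem_filter, mem_univ, true_and]
    exact fun h => h.2

end family

def CodeRel {γ ι R : Type*} [LE R] (T : γ → Finset (ι × R)) (x y : γ) : Prop :=
  ∃ i p q, (i, p) ∈ T x ∧ (i, q) ∈ T y ∧ p ≤ q

section code

variable {α : Type*} [PartialOrder α] [Fintype α] {m : ℕ} (L : Fin m → PLE α)

theorem exists_codeRel_eq_realizedLE {d : ℕ} (hμ : ∀ u, mu L u ≤ d) :
    ∃ T : α → Finset (Fin (Fintype.card α * d) × Fin (Fintype.card α)),
      (∀ x, #(T x) ≤ d) ∧ CodeRel T = RealizedLE L := by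
  classical
  let S : Finset (Fin m) := {i | (L i).dom.Nonempty}
  let σ : S ↪ Fin (Fintype.card α * d) :=
    S.equivFin.toEmbedding.trans (Fin.castLEEmb (card_filter_dom_nonempty_le L hμ))
  let T (x : α) : Finset _ := ({i : S | x ∈ (L i).dom} : Finset S).image
    fun i => (σ i, (⟨(L i).rank x, (L i).rank_lt_card x⟩ : Fin _))
  refine ⟨T, fun x => ?_, ?_⟩
  · calc #(T x) ≤ #({i : S | x ∈ (L i).dom} : Finset S) := card_image_le
      _ ≤ #{i | x ∈ (L i).dom} :=
        card_le_card_of_injOn Subtype.val (fun i hi => by simpa using hi)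
          Subtype.val_injective.injOn
      _ = mu L x := (mu_eq_card L x).symm
      _ ≤ d := hμ x
  · funext x y
    apply propext
    simp only [RealizedLE, CodeRel, T, mem_image, mem_filter, mem_univ, true_and, Prod.mk.injEq]
    constructor
    · rintro ⟨c, p, q, ⟨i, hx, rfl, rfl⟩, ⟨j, hy, hij, rfl⟩, hpq⟩
      obtain rfl : i = j := σ.injective hij.symm
      exact ⟨i, hx, hy, ((L i).rel_iff_rank_le hx hy).2 hpq⟩
    · rintro ⟨i, hx, hy, hxy⟩
      have hi : i ∈ S := by simpa [S] using ⟨x, hx⟩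
      exact ⟨σ ⟨i, hi⟩, _, _, ⟨⟨i, hi⟩, hx, rfl, rfl⟩, ⟨⟨i, hi⟩, hy, rfl, rfl⟩,
        ((L i).rel_iff_rank_le hx hy).1 hxy⟩

end code

lemma card_finsets_of_card_le (X : Type*) [Finite X] (d : ℕ) :
    Nat.card {s : Finset X // #s ≤ d} ≤ (Nat.card X + 1) ^ d := by
  classical
  let f (g : Fin d → Option X) : {s : Finset X // #s ≤ d} :=
    ⟨(univ.image g).eraseNone,
      (card_eraseNone_le _).trans (card_image_le.trans (card_fin d).le)⟩
  have hf : Function.Surjective f := by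
    rintro ⟨s, hs⟩
    refine ⟨fun i => s.toList[(i : ℕ)]?, Subtype.ext (Finset.ext fun x => ?_)⟩
    simp only [f, mem_eraseNone, mem_image, mem_univ, true_and]
    rw [← mem_toList, List.mem_iff_getElem?]
    constructor
    · rintro ⟨i, hi⟩
      exact ⟨i, hi⟩
    · rintro ⟨i, hi⟩
      obtain ⟨hi', -⟩ := List.getElem?_eq_some_iff.1 hi
      exact ⟨⟨i, hi'.trans_le (by simpa using hs)⟩, hi⟩
  simpa [Nat.card_fun] using Nat.card_le_card_of_surjective f hf

lemma card_finset_families_of_card_le (γ X : Type*) [Fintype γ] [Finite X] (d : ℕ) :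
    Nat.card {T : γ → Finset X // ∀ x, #(T x) ≤ d} ≤ ((Nat.card X + 1) ^ d) ^ Nat.card γ := by
  rw [Nat.card_congr (Equiv.subtypePiEquivPi (β := fun _ : γ => Finset X) (p := fun _ s => #s ≤ d)),
    Nat.card_fun]
  exact Nat.pow_le_pow_left (card_finsets_of_card_le X d) _

def BipartitePoset {ι κ : Type*} (_ : ι → κ → Bool) : Type _ := ι ⊕ κ

namespace BipartitePoset

variable {ι κ : Type*} {B : ι → κ → Bool}

instance [Fintype ι] [Fintype κ] : Fintype (BipartitePoset B) :=
  inferInstanceAs (Fintype (ι ⊕ κ))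

def Le (B : ι → κ → Bool) : ι ⊕ κ → ι ⊕ κ → Prop
  | .inl i, .inl i' => i = i'
  | .inr j, .inr j' => j = j'
  | .inl i, .inr j => B i j = true
  | .inr _, .inl _ => False

instance : PartialOrder (BipartitePoset B) where
  le := Le B
  le_refl := by rintro (i | j) <;> rfl
  le_trans := by rintro (a | a) (b | b) (c | c) <;> grind [Le]
  le_antisymm := by rintro (a | a) (b | b) <;> grind [Le]

lemma lt_def {x y : BipartitePoset B} : x < y ↔ Le B x y ∧ ¬ Le B y x := lt_iff_le_not_ge

def inl (i : ι) : BipartitePoset B := Sum.inl i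

def inr (j : κ) : BipartitePoset B := Sum.inr j

lemma inl_lt_inr_iff {i : ι} {j : κ} :
    (inl i : BipartitePoset B) < inr j ↔ B i j = true := by
  rw [lt_def]
  simp [Le, inl, inr]

lemma false_of_lt_of_lt {x y z : BipartitePoset B} (hxy : x < y) (hyz : y < z) : False := by
  rw [lt_def] at hxy hyz
  revert x y z
  rintro (x | x) (y | y) (z | z) <;> grind [Le]

end BipartitePoset

open BipartitePoset in
theorem exists_le_localDim_bipartitePoset (ι κ : Type*) [Fintype ι] [Fintype κ] (d : ℕ)
    (h : ((Fintype.card (ι ⊕ κ) * d * Fintype.card (ι ⊕ κ) + 1) ^ d) ^ Fintype.card (ι ⊕ κ) <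
      2 ^ (Fintype.card ι * Fintype.card κ)) :
    ∃ B : ι → κ → Bool, d ≤ localDim (BipartitePoset B) := by
  by_contra! hsmall
  set N := Fintype.card (ι ⊕ κ)
  have hcode (B : ι → κ → Bool) : ∃ T : ι ⊕ κ → Finset (Fin (N * d) × Fin N),
      (∀ x, #(T x) ≤ d) ∧ ∀ i j, B i j = true ↔ ¬ CodeRel T (Sum.inr j) (Sum.inl i) := by
    obtain ⟨m, L, hL, hμ⟩ := exists_isLocalRealizer_mu_le_localDim (BipartitePoset B)
    obtain ⟨T, hT, hTL⟩ := exists_codeRel_eq_realizedLE L fun u => (hμ u).trans (hsmall B).le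
    refine ⟨T, hT, fun i j => ?_⟩
    have key := hL.realizedLE_iff_not_lt (x := inl i) (y := inr j) Sum.inl_ne_inr
    rw [inl_lt_inr_iff, ← hTL] at key
    exact iff_not_comm.1 key
  choose T hT hB using hcode
  have hinj : Function.Injective
      fun B => (⟨T B, hT B⟩ : {T : ι ⊕ κ → Finset (Fin (N * d) × Fin N) // ∀ x, #(T x) ≤ d}) := by
    intro B B' hBB'
    funext i j
    rw [Bool.eq_iff_iff, hB, hB, Subtype.mk.inj hBB']
  have hcard := (Nat.card_le_card_of_injective _ hinj).trans (card_finset_families_of_card_le _ _ d)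
  simp only [Nat.card_fun, Nat.card_eq_fintype_card, Fintype.card_bool, Fintype.card_prod,
    Fintype.card_fin] at hcard
  rw [← pow_mul, Nat.mul_comm (Fintype.card κ)] at hcard
  exact (h.trans_le hcard).false

lemma code_count_lt_two_pow_sq {d n : ℕ} (hn : n = 2 ^ (2 * d + 6)) :
    (((n + n) * d * (n + n) + 1) ^ d) ^ (n + n) < 2 ^ (n * n) := by
  have hd : d + 1 ≤ 2 ^ d := Nat.lt_two_pow_self
  replace hn : n = 64 * 2 ^ d * 2 ^ d := by
    rw [hn, show 2 * d + 6 = d + d + 6 by ring, pow_add, pow_add]; ring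
  have hbase : (n + n) * d * (n + n) + 1 ≤ 2 ^ (5 * d + 14) := by
    have hsq : 2 ^ (5 * d + 14) = (n + n) * (n + n) * 2 ^ d := by
      rw [hn, show 5 * d + 14 = d + d + d + d + d + 14 by ring]
      simp only [pow_add]
      ring
    have hpos : 0 < (n + n) * (n + n) := by rw [hn]; positivity
    calc (n + n) * d * (n + n) + 1 ≤ (n + n) * (n + n) * (d + 1) := by
          rw [Nat.mul_add_one, mul_right_comm]; omega
      _ ≤ 2 ^ (5 * d + 14) := hsq ▸ Nat.mul_le_mul_left _ hd
  have hexp : (5 * d + 14) * d * (n + n) < n * n := by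
    have hsmall : (5 * d + 14) * d * 2 < n := by
      rw [hn]
      nlinarith [Nat.mul_le_mul hd hd]
    calc (5 * d + 14) * d * (n + n) = (5 * d + 14) * d * 2 * n := by ring
      _ < n * n := Nat.mul_lt_mul_of_pos_right hsmall (by rw [hn]; positivity)
  calc (((n + n) * d * (n + n) + 1) ^ d) ^ (n + n)
      ≤ ((2 ^ (5 * d + 14)) ^ d) ^ (n + n) := by gcongr
    _ = 2 ^ ((5 * d + 14) * d * (n + n)) := by rw [← pow_mul, ← pow_mul, mul_assoc]
    _ < 2 ^ (n * n) := Nat.pow_lt_pow_right (by norm_num) hexp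

theorem localDim_unbounded_height_two_general (d : ℕ) :
    ∃ (α : Type) (_ : Fintype α) (inst : PartialOrder α),
      (∀ x y z : α, inst.lt x y → inst.lt y z → False) ∧ d ≤ @localDim α inst := by
  let n := 2 ^ (2 * d + 6)
  obtain ⟨B, hB⟩ := exists_le_localDim_bipartitePoset (Fin n) (Fin n) d
    (by simpa only [Fintype.card_sum, Fintype.card_fin] using code_count_lt_two_pow_sq rfl)
  exact ⟨BipartitePoset B, inferInstance, inferInstance,
    fun _ _ _ => BipartitePoset.false_of_lt_of_lt, hB⟩

/-- Local dimension is unbounded on the class of finite posets of height 2. -/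
theorem localDim_unbounded_height_two (d : ℕ) (hd : 1 ≤ d) :
    ∃ (α : Type) (_ : Fintype α) (inst : PartialOrder α),
      (∀ x y z : α, inst.lt x y → inst.lt y z → False) ∧ d ≤ @localDim α inst :=
  localDim_unbounded_height_two_general d
end

section
/- For every integer n ≥ 2, the local dimension of the standard example S_n is at most 3. -/
/-- The elements of the standard example `S_n`: minimal elements `a i`, maximal elements `b i`. -/
inductive SElt (n : ℕ) : Type
  | a : Fin n → SElt n
  | b : Fin n → SElt n

/-- The order of the standard example: `a i < b j` iff `i ≠ j`, nothing else. -/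
instance (n : ℕ) : PartialOrder (SElt n) where
  le x y := x = y ∨ ∃ i j : Fin n, x = .a i ∧ y = .b j ∧ i ≠ j
  le_refl x := Or.inl rfl
  le_trans := by
    rintro x y z (rfl | ⟨i, j, rfl, rfl, hij⟩) hyz
    · exact hyz
    · rcases hyz with rfl | ⟨i', j', h1, h2, h3⟩
      · exact Or.inr ⟨i, j, rfl, rfl, hij⟩
      · exact absurd h1 (by simp)
  le_antisymm := by
    rintro x y (rfl | ⟨i, j, rfl, rfl, hij⟩) hyx
    · rfl
    · rcases hyx with h | ⟨i', j', h1, h2, h3⟩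
      · exact h.symm
      · exact absurd h1 (by simp)

/-!
Two linear extensions of `S_n` suffice to reverse every incomparable pair except the pairs
`a i ∥ b i`: order the `a`'s increasingly and the `b`'s decreasingly in one, the other way round
in the other. Each remaining pair `a i ∥ b i` is reversed by its own two-element ple `b i < a i`.
Every point then lies in the domains of the two linear extensions and of exactly one of the
two-element ples.
-/

namespace PLE

variable {α β : Type*} [PartialOrder α] [LinearOrder β]

def ofRankOn (s : Set α) (r : α → β) (hinj : s.InjOn r) (hmono : MonotoneOn r s) : PLE α where
  dom := s
  rel x y := r x ≤ r y
  refl _ _ := le_rfl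
  antisymm _ hx _ hy hxy hyx := hinj hx hy (le_antisymm hxy hyx)
  trans _ _ _ _ _ _ := le_trans
  total _ _ _ _ := le_total _ _
  extends_le _ hx _ hy hxy := hmono hx hy hxy

end PLE

theorem mu_vecCons_le {α : Type*} [PartialOrder α] {m : ℕ} (L₀ : PLE α) (L : Fin m → PLE α)
    (u : α) : mu (Matrix.vecCons L₀ L) u ≤ mu L u + 1 := by
  have hsub : {i | u ∈ (Matrix.vecCons L₀ L i).dom} ⊆
      insert 0 (Fin.succ '' {j | u ∈ (L j).dom}) := by
    intro i hi
    induction i using Fin.cases with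
    | zero => exact Set.mem_insert _ _
    | succ j => exact Set.mem_insert_of_mem _ ⟨j, by simpa using hi, rfl⟩
  calc mu (Matrix.vecCons L₀ L) u ≤ (insert 0 (Fin.succ '' {j | u ∈ (L j).dom})).ncard :=
        Set.ncard_le_ncard hsub
    _ ≤ (Fin.succ '' {j | u ∈ (L j).dom}).ncard + 1 := Set.ncard_insert_le _ _
    _ = mu L u + 1 := by rw [Set.ncard_image_of_injective _ (Fin.succ_injective _), mu]

theorem localDim_le_of_isLocalRealizer {α : Type*} [PartialOrder α] {m d : ℕ}
    (L : Fin m → PLE α) (hL : IsLocalRealizer L) (hd : 0 < d) (hmu : ∀ u, mu L u ≤ d) :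
    localDim α ≤ d :=
  Nat.sInf_le ⟨hd, m, L, hL, hmu⟩

namespace SElt

variable {n : ℕ} {i j : Fin n}

@[simp] theorem a_le_a_iff : a i ≤ a j ↔ i = j := by
  simp [LE.le]

@[simp] theorem a_le_b_iff : a i ≤ b j ↔ i ≠ j := by
  simp [LE.le]

@[simp] theorem not_b_le_a : ¬ b i ≤ a j := by
  simp [LE.le]

@[simp] theorem b_le_b_iff : b i ≤ b j ↔ i = j := by
  simp [LE.le]

theorem monotone_iff {β : Type*} [Preorder β] {r : SElt n → β} :
    Monotone r ↔ ∀ i j, i ≠ j → r (a i) ≤ r (b j) := by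
  refine ⟨fun hr i j hij => hr (a_le_b_iff.2 hij), fun hr => ?_⟩
  rintro (i | i) (j | j) h <;> simp at h
  · rw [h]
  · exact hr i j h
  · rw [h]

/-- The ranks of the linear extension `a₀ < ⋯ < aₙ₋₁ < bₙ₋₁ < ⋯ < b₀`. -/
def rankAsc : SElt n → ℤ
  | a i => i
  | b j => 2 * n - j

/-- The ranks of the linear extension `aₙ₋₁ < ⋯ < a₀ < b₀ < ⋯ < bₙ₋₁`. -/
def rankDesc : SElt n → ℤ
  | a i => -i
  | b j => n + j

theorem rankAsc_injective : Function.Injective (rankAsc (n := n)) := by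
  rintro (i | i) (j | j) h <;> simp [rankAsc, Fin.ext_iff] at h ⊢ <;> omega

theorem rankDesc_injective : Function.Injective (rankDesc (n := n)) := by
  rintro (i | i) (j | j) h <;> simp [rankDesc, Fin.ext_iff] at h ⊢ <;> omega

theorem rankAsc_monotone : Monotone (rankAsc (n := n)) :=
  monotone_iff.2 fun i j _ => by simp only [rankAsc]; omega

theorem rankDesc_monotone : Monotone (rankDesc (n := n)) :=
  monotone_iff.2 fun i j _ => by simp only [rankDesc]; omega

def isMin : SElt n → Bool
  | a _ => true
  | b _ => false

theorem isMin_injOn_pair (i : Fin n) : ({a i, b i} : Set (SElt n)).InjOn isMin := by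
  rintro x (rfl | rfl) y (rfl | rfl) h <;> simp_all [isMin]

theorem isMin_monotoneOn_pair (i : Fin n) : MonotoneOn isMin ({a i, b i} : Set (SElt n)) := by
  rintro x (rfl | rfl) y (rfl | rfl) h <;> simp_all

def pairPLE (i : Fin n) : PLE (SElt n) :=
  .ofRankOn {a i, b i} isMin (isMin_injOn_pair i) (isMin_monotoneOn_pair i)

theorem mu_pairPLE_le_one (u : SElt n) : mu (pairPLE (n := n)) u ≤ 1 :=
  (Set.ncard_le_one).2 fun i hi j hj => by cases u <;> simp_all [pairPLE, PLE.ofRankOn]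

def standardRealizer (n : ℕ) : Fin (n + 2) → PLE (SElt n) :=
  Matrix.vecCons
    (.ofRankOn .univ rankAsc rankAsc_injective.injOn (rankAsc_monotone.monotoneOn _)) <|
  Matrix.vecCons
    (.ofRankOn .univ rankDesc rankDesc_injective.injOn (rankDesc_monotone.monotoneOn _)) <|
  pairPLE

theorem isLocalRealizer_standardRealizer (n : ℕ) : IsLocalRealizer (standardRealizer n) := by
  have asc (x y : SElt n) (h : rankAsc y ≤ rankAsc x) :
      ∃ k, x ∈ (standardRealizer n k).dom ∧ y ∈ (standardRealizer n k).dom ∧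
        (standardRealizer n k).rel y x := ⟨0, trivial, trivial, h⟩
  have desc (x y : SElt n) (h : rankDesc y ≤ rankDesc x) :
      ∃ k, x ∈ (standardRealizer n k).dom ∧ y ∈ (standardRealizer n k).dom ∧
        (standardRealizer n k).rel y x := ⟨1, trivial, trivial, h⟩
  refine ⟨fun x y hxy => ⟨0, trivial, trivial, rankAsc_monotone hxy.le⟩, ?_⟩
  rintro (i | i) (j | j) hxy hyx <;> simp only [a_le_a_iff, a_le_b_iff, not_b_le_a, b_le_b_iff,
    not_not, not_false_eq_true] at hxy hyx
  · rcases lt_or_gt_of_ne hxy with h | h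
    · exact desc (a i) (a j) (by simp only [rankDesc]; omega)
    · exact asc (a i) (a j) (by simp only [rankAsc]; omega)
  · subst hxy
    exact ⟨i.succ.succ, by simp [standardRealizer, pairPLE, PLE.ofRankOn, isMin]⟩
  · exact asc (b i) (a j) (by simp only [rankAsc]; omega)
  · rcases lt_or_gt_of_ne hxy with h | h
    · exact asc (b i) (b j) (by simp only [rankAsc]; omega)
    · exact desc (b i) (b j) (by simp only [rankDesc]; omega)

theorem mu_standardRealizer_le (n : ℕ) (u : SElt n) : mu (standardRealizer n) u ≤ 3 :=
  calc mu (standardRealizer n) u ≤ mu pairPLE u + 1 + 1 :=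
        (mu_vecCons_le _ _ u).trans (Nat.add_le_add_right (mu_vecCons_le _ _ u) 1)
    _ ≤ 3 := by have := mu_pairPLE_le_one u; omega

end SElt

theorem localDim_standardExample_le_three_general (n : ℕ) :
    localDim (SElt n) ≤ 3 :=
  localDim_le_of_isLocalRealizer _ (SElt.isLocalRealizer_standardRealizer n) three_pos
    (SElt.mu_standardRealizer_le n)

/-- The local dimension of the standard example `S_n` is at most `3`. -/
theorem localDim_standardExample_le_three (n : ℕ) (hn : 2 ≤ n) :
    localDim (SElt n) ≤ 3 :=
  localDim_standardExample_le_three_general n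
end

section
/- For every integer n ≥ 3, the local dimension of the Kelly poset K_n equals 3. -/
/-- The elements of the Kelly poset `K n`:
`a 1, …, a n`, `b 1, …, b n`, `w 1, …, w (n-1)`, `z 1, …, z (n-1)`. -/
inductive KElt (n : ℕ) : Type
  | a : Fin n → KElt n
  | b : Fin n → KElt n
  | w : Fin (n - 1) → KElt n
  | z : Fin (n - 1) → KElt n

namespace KElt

/-- Inclusion `Fin (n-1) → Fin n` keeping the value. -/
def lo {n : ℕ} (i : Fin (n - 1)) : Fin n := ⟨i.val, by have := i.isLt; omega⟩

/-- The map `Fin (n-1) → Fin n` sending `i` to `i + 1`. -/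
def hi {n : ℕ} (i : Fin (n - 1)) : Fin n := ⟨i.val + 1, by have := i.isLt; omega⟩

/-- The defining relations (cover relations) of the Kelly poset, with indices written
0-based: `aᵢ < wᵢ`, `wᵢ < bᵢ₊₁`, `wᵢ < wᵢ₊₁`, `aᵢ₊₁ < zᵢ`, `zᵢ < bᵢ`, `zᵢ₊₁ < zᵢ`. -/
inductive kcov {n : ℕ} : KElt n → KElt n → Prop
  | aw (i : Fin (n - 1)) : kcov (.a (lo i)) (.w i)
  | wb (i : Fin (n - 1)) : kcov (.w i) (.b (hi i))
  | ww (i j : Fin (n - 1)) : j.val = i.val + 1 → kcov (.w i) (.w j)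
  | az (i : Fin (n - 1)) : kcov (.a (hi i)) (.z i)
  | zb (i : Fin (n - 1)) : kcov (.z i) (.b (lo i))
  | zz (i j : Fin (n - 1)) : j.val = i.val + 1 → kcov (.z j) (.z i)

/-- A measure that strictly increases along the defining relations. -/
def kmeas {n : ℕ} : KElt n → ℕ
  | .a _ => 0
  | .w i => i.val + 1
  | .z i => n - i.val
  | .b _ => n + 1

theorem kcov_meas {n : ℕ} {x y : KElt n} (h : kcov x y) : kmeas x < kmeas y := by
  cases h with
  | aw i => simp [kmeas]
  | wb i => have := i.isLt; simp [kmeas]; omega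
  | ww i j h => have := i.isLt; simp [kmeas]; omega
  | az i => have := i.isLt; simp [kmeas]; omega
  | zb i => have := i.isLt; simp [kmeas] <;> omega
  | zz i j h => have := i.isLt; have := j.isLt; simp [kmeas]; omega

theorem rtg_meas {n : ℕ} {x y : KElt n} (h : Relation.ReflTransGen kcov x y) :
    kmeas x ≤ kmeas y := by
  induction h with
  | refl => exact le_rfl
  | tail _ hc ih => exact le_trans ih (le_of_lt (kcov_meas hc))

/-- The Kelly poset: reflexive–transitive closure of the defining relations. -/
instance (n : ℕ) : PartialOrder (KElt n) where
  le := Relation.ReflTransGen kcov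
  le_refl _ := Relation.ReflTransGen.refl
  le_trans _ _ _ := Relation.ReflTransGen.trans
  le_antisymm := by
    intro x y hxy hyx
    rcases Relation.ReflTransGen.cases_head hxy with rfl | ⟨c, hc, hcy⟩
    · rfl
    · exfalso
      have h1 : kmeas x < kmeas c := kcov_meas hc
      have h2 : kmeas c ≤ kmeas y := rtg_meas hcy
      have h3 : kmeas y ≤ kmeas x := rtg_meas hyx
      omega

end KElt

/-!
The upper bound comes from two linear extensions of `K_n`, one listing the chain of `w`'s
early and one listing the chain of `z`'s early: together they reverse every incomparable pair
except the critical pairs `(aᵢ, bᵢ)`, and each of those is reversed by its own two-element ple.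

For the lower bound, `aᵢ` and `bⱼ` (`i ≠ j`) are comparable while `aᵢ ∥ bᵢ`, so a single ple
cannot reverse two of the pairs `(aᵢ, bᵢ)`. Two incomparable elements need two distinct ples
containing both of them, so if every `aᵢ` lay in at most two ples, `a₀, a₁, a₂` would lie in
exactly the same two ples, which would then have to reverse the three pairs `(aᵢ, bᵢ)`.
-/

open Function

namespace PLE

variable {α : Type*} [PartialOrder α]

def ofRank {β : Type*} [LinearOrder β] (f : α → β) (hf : Injective f) (hmono : Monotone f) :
    PLE α where
  dom := Set.univ
  rel x y := f x ≤ f y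
  refl _ _ := le_rfl
  antisymm _ _ _ _ hxy hyx := hf (le_antisymm hxy hyx)
  trans _ _ _ _ _ _ := le_trans
  total _ _ _ _ := le_total _ _
  extends_le _ _ _ _ h := hmono h

def reversal (x y : α) (h : ¬ x ≤ y) : PLE α where
  dom := {x, y}
  rel u v := u = v ∨ (u = y ∧ v = x)
  refl _ _ := Or.inl rfl
  antisymm := by grind
  trans := by grind
  total := by grind
  extends_le := by
    rintro u (rfl | rfl) v (rfl | rfl) huv <;> simp_all

theorem eq_of_rel_of_rel_of_le_of_le (P : PLE α) {x y x' y' : α} (hx : x ∈ P.dom)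
    (hy : y ∈ P.dom) (hx' : x' ∈ P.dom) (hy' : y' ∈ P.dom) (h : P.rel y x) (h' : P.rel y' x')
    (hxy' : x ≤ y') (hx'y : x' ≤ y) : y = y' :=
  P.antisymm y hy y' hy' (P.trans _ hy _ hx _ hy' h (P.extends_le _ hx _ hy' hxy'))
    (P.trans _ hy' _ hx' _ hy h' (P.extends_le _ hx' _ hy hx'y))

end PLE

section LocalDimension

variable {α : Type*} [PartialOrder α] {m : ℕ}

theorem mu_cons_le (P : PLE α) (L : Fin m → PLE α) (u : α) :
    mu (Fin.cons P L : Fin (m + 1) → PLE α) u ≤ mu L u + 1 := by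
  have hsub : {i : Fin (m + 1) | u ∈ ((Fin.cons P L : Fin (m + 1) → PLE α) i).dom} ⊆
      insert 0 (Fin.succ '' {i | u ∈ (L i).dom}) := by
    intro i hi
    cases i using Fin.cases <;> simp_all
  calc mu (Fin.cons P L : Fin (m + 1) → PLE α) u
      ≤ (insert 0 (Fin.succ '' {i | u ∈ (L i).dom})).ncard :=
        Set.ncard_le_ncard hsub (Set.toFinite _)
    _ ≤ (Fin.succ '' {i | u ∈ (L i).dom}).ncard + 1 := Set.ncard_insert_le _ _
    _ ≤ mu L u + 1 := by grw [Set.ncard_image_le (Set.toFinite _)]; rfl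

theorem mu_le_one_of_pairwise_disjoint {L : Fin m → PLE α}
    (hL : Pairwise (Disjoint on fun i => (L i).dom)) (u : α) : mu L u ≤ 1 :=
  Set.ncard_le_one_iff_subsingleton.mpr fun _ hi _ hj =>
    by_contra fun hij => Set.disjoint_left.mp (hL hij) hi hj

theorem localDim_eq_of_isLocalRealizer_of_forall {d : ℕ} (hd : 0 < d) (L : Fin m → PLE α)
    (hL : IsLocalRealizer L) (hLd : ∀ u, mu L u ≤ d)
    (h : ∀ (m' : ℕ) (L' : Fin m' → PLE α), IsLocalRealizer L' → ∃ u, d ≤ mu L' u) :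
    localDim α = d := by
  have hmem : d ∈ {d : ℕ | 0 < d ∧ ∃ m : ℕ, ∃ L : Fin m → PLE α,
      IsLocalRealizer L ∧ ∀ u : α, mu L u ≤ d} := ⟨hd, m, L, hL, hLd⟩
  refine le_antisymm (Nat.sInf_le hmem) (le_csInf ⟨d, hmem⟩ ?_)
  rintro e ⟨-, m', L', hL', he⟩
  obtain ⟨u, hu⟩ := h m' L' hL'
  exact hu.trans (he u)

namespace IsLocalRealizer

variable {L : Fin m → PLE α}

theorem exists_ne_of_not_le_of_not_le (hL : IsLocalRealizer L) {x y : α} (hxy : ¬ x ≤ y)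
    (hyx : ¬ y ≤ x) : ∃ s t, s ≠ t ∧ x ∈ (L s).dom ∧ y ∈ (L s).dom ∧
      x ∈ (L t).dom ∧ y ∈ (L t).dom := by
  obtain ⟨s, hxs, hys, hs⟩ := hL.2 x y hxy hyx
  obtain ⟨t, hyt, hxt, ht⟩ := hL.2 y x hyx hxy
  refine ⟨s, t, ?_, hxs, hys, hxt, hyt⟩
  rintro rfl
  exact hxy ((L s).antisymm x hxs y hys ht hs).le

theorem setOf_mem_dom_eq (hL : IsLocalRealizer L) {x y : α} (hxy : ¬ x ≤ y) (hyx : ¬ y ≤ x)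
    (hx : mu L x ≤ 2) (hy : mu L y ≤ 2) :
    {i | x ∈ (L i).dom} = {i | y ∈ (L i).dom} := by
  obtain ⟨s, t, hst, hxs, hys, hxt, hyt⟩ := hL.exists_ne_of_not_le_of_not_le hxy hyx
  have hpair : ∀ u, u ∈ (L s).dom → u ∈ (L t).dom → mu L u ≤ 2 →
      ({s, t} : Set (Fin m)) = {i | u ∈ (L i).dom} := fun u hus hut hu =>
    Set.eq_of_subset_of_ncard_le (Set.insert_subset hus (Set.singleton_subset_iff.mpr hut))
      (by rwa [Set.ncard_pair hst]) (Set.toFinite _)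
  rw [← hpair x hxs hxt hx, ← hpair y hys hyt hy]

/-- The hypotheses say that `a` and `b` span a copy of the standard example `S₃`. -/
theorem exists_three_le_mu (hL : IsLocalRealizer L) (a b : Fin 3 → α)
    (hcross : ∀ i j, i ≠ j → a i ≤ b j) (hinc : ∀ i j, i ≠ j → ¬ a i ≤ a j)
    (hcrit : ∀ i, ¬ a i ≤ b i) : ∃ i, 3 ≤ mu L (a i) := by
  by_contra! hmu
  have hdom : ∀ i, {t | a i ∈ (L t).dom} = {t | a 0 ∈ (L t).dom} := by
    intro i
    rcases eq_or_ne i 0 with rfl | hi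
    · rfl
    · exact hL.setOf_mem_dom_eq (hinc i 0 hi) (hinc 0 i hi.symm) (by grind) (by grind)
  have hrev : ∀ i, ∃ r, a i ∈ (L r).dom ∧ b i ∈ (L r).dom ∧ (L r).rel (b i) (a i) := fun i =>
    hL.2 _ _ (hcrit i) fun hba => hinc (i + 1) i (by grind) ((hcross _ _ (by grind)).trans hba)
  choose r har hbr hr using hrev
  obtain ⟨i, -, j, -, hij, hrij⟩ := Set.exists_ne_map_eq_of_ncard_lt_of_maps_to
    (s := Set.univ) (t := {t | a 0 ∈ (L t).dom}) (f := r) (by simpa [mu] using hmu 0)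
    (fun i _ => hdom i ▸ har i) (Set.toFinite _)
  have hb : b i = b j := (L (r j)).eq_of_rel_of_rel_of_le_of_le (hrij ▸ har i) (hrij ▸ hbr i)
    (har j) (hbr j) (hrij ▸ hr i) (hr j) (hcross i j hij) (hcross j i hij.symm)
  exact hcrit i (hb ▸ hcross i j hij)

end IsLocalRealizer

end LocalDimension

namespace KElt

variable {n : ℕ}

/-- The order of `K_n` read off the indices (0-based). -/
def LeByIndex : KElt n → KElt n → Prop
  | .a i, .a j => i = j
  | .a i, .w j => i.val ≤ j.val
  | .a i, .z j => j.val < i.val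
  | .a i, .b j => i ≠ j
  | .w i, .w j => i.val ≤ j.val
  | .w i, .b j => i.val < j.val
  | .z i, .z j => j.val ≤ i.val
  | .z i, .b j => j.val ≤ i.val
  | .b i, .b j => i = j
  | _, _ => False

theorem leByIndex_of_le {x y : KElt n} (h : x ≤ y) : LeByIndex x y := by
  induction h with
  | refl => cases x <;> simp [LeByIndex]
  | tail _ hc ih => cases hc <;> cases x <;> simp_all [LeByIndex, lo, hi, Fin.ext_iff] <;> omega

theorem w_le_w {i j : Fin (n - 1)} (h : i.val ≤ j.val) : (w i : KElt n) ≤ w j := by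
  obtain ⟨j, hj⟩ := j
  change i.val ≤ j at h
  revert hj
  induction j, h using Nat.le_induction with
  | base => exact fun _ => le_rfl
  | succ k _ ih => exact fun hk => (ih (by omega)).tail (kcov.ww ⟨k, by omega⟩ _ rfl)

theorem z_le_z {i j : Fin (n - 1)} (h : j.val ≤ i.val) : (z i : KElt n) ≤ z j := by
  obtain ⟨i, hi⟩ := i
  change j.val ≤ i at h
  revert hi
  induction i, h using Nat.le_induction with
  | base => exact fun _ => le_rfl
  | succ k _ ih => exact fun hk => .head (kcov.zz ⟨k, by omega⟩ _ rfl) (ih (by omega))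

theorem a_le_w {i : Fin n} {j : Fin (n - 1)} (h : i.val ≤ j.val) : (a i : KElt n) ≤ w j :=
  Relation.ReflTransGen.head (kcov.aw ⟨i, by omega⟩) (w_le_w h)

theorem a_le_z {i : Fin n} {j : Fin (n - 1)} (h : j.val < i.val) : (a i : KElt n) ≤ z j := by
  obtain ⟨_ | k, hk⟩ := i
  · cases h
  · exact Relation.ReflTransGen.head (kcov.az ⟨k, by omega⟩) (z_le_z (by simpa using h))

theorem w_le_b {i : Fin (n - 1)} {j : Fin n} (h : i.val < j.val) : (w i : KElt n) ≤ b j := by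
  obtain ⟨_ | k, hk⟩ := j
  · cases h
  · exact (w_le_w (j := ⟨k, by omega⟩) (by simpa using h)).tail (kcov.wb _)

theorem z_le_b {i : Fin (n - 1)} {j : Fin n} (h : j.val ≤ i.val) : (z i : KElt n) ≤ b j :=
  (z_le_z (j := ⟨j, by omega⟩) h).tail (kcov.zb _)

theorem a_le_b {i j : Fin n} (h : i ≠ j) : (a i : KElt n) ≤ b j := by
  rcases Fin.lt_or_lt_of_ne h with h | h
  · exact (a_le_w (j := ⟨j - 1, by omega⟩) (by simp; omega)).trans (w_le_b (by simp; omega))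
  · exact (a_le_z (j := ⟨j, by omega⟩) h).trans (z_le_b le_rfl)

theorem le_iff_leByIndex {x y : KElt n} : x ≤ y ↔ LeByIndex x y := by
  refine ⟨leByIndex_of_le, fun h => ?_⟩
  cases x <;> cases y <;> simp only [LeByIndex] at h
  all_goals first
    | exact h ▸ le_rfl
    | exact a_le_w h | exact a_le_z h | exact a_le_b h | exact w_le_w h | exact w_le_b h
    | exact z_le_z h | exact z_le_b h

/-- Position in the linear extension
`a₀ w₀ a₁ w₁ … w_{n-2} a_{n-1} b_{n-1} z_{n-2} … z₀ b₀`. -/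
def rankW : KElt n → ℕ
  | .a i => 2 * i.val
  | .w i => 2 * i.val + 1
  | .b i => 4 * n - 3 - 2 * i.val
  | .z i => 4 * n - 4 - 2 * i.val

/-- Position in the linear extension
`a_{n-1} z_{n-2} a_{n-2} … z₀ a₀ b₀ w₀ b₁ … w_{n-2} b_{n-1}`. -/
def rankZ : KElt n → ℕ
  | .a i => 2 * n - 2 - 2 * i.val
  | .z i => 2 * n - 3 - 2 * i.val
  | .b i => 2 * n - 1 + 2 * i.val
  | .w i => 2 * n + 2 * i.val

theorem monotone_of_kcov {β : Type*} [Preorder β] {f : KElt n → β}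
    (hf : ∀ x y, kcov x y → f x ≤ f y) : Monotone f := fun _ _ h => by
  induction h with
  | refl => exact le_rfl
  | tail _ hc ih => exact ih.trans (hf _ _ hc)

theorem rankW_injective : Injective (rankW : KElt n → ℕ) := by
  intro x y h
  cases x <;> cases y <;>
    simp only [rankW, a.injEq, b.injEq, w.injEq, z.injEq, Fin.ext_iff] at h ⊢ <;> omega

theorem rankZ_injective : Injective (rankZ : KElt n → ℕ) := by
  intro x y h
  cases x <;> cases y <;>
    simp only [rankZ, a.injEq, b.injEq, w.injEq, z.injEq, Fin.ext_iff] at h ⊢ <;> omega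

theorem rankW_monotone : Monotone (rankW : KElt n → ℕ) :=
  monotone_of_kcov fun _ _ h => by cases h <;> simp only [rankW, lo, hi] <;> omega

theorem rankZ_monotone : Monotone (rankZ : KElt n → ℕ) :=
  monotone_of_kcov fun _ _ h => by cases h <;> simp only [rankZ, lo, hi] <;> omega

theorem le_or_exists_eq_a_b_of_rank_lt {x y : KElt n} (hW : rankW x < rankW y)
    (hZ : rankZ x < rankZ y) : x ≤ y ∨ ∃ i, x = a i ∧ y = b i := by
  rw [le_iff_leByIndex]
  cases x <;> cases y <;> simp only [rankW, rankZ] at hW hZ <;> simp [LeByIndex] <;> omega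

theorem not_a_le_b (i : Fin n) : ¬ (a i : KElt n) ≤ b i := by
  simp [le_iff_leByIndex, LeByIndex]

def realizer (n : ℕ) : Fin (n + 2) → PLE (KElt n) :=
  Fin.cons (PLE.ofRank rankW rankW_injective rankW_monotone) <|
    Fin.cons (PLE.ofRank rankZ rankZ_injective rankZ_monotone) fun i =>
      PLE.reversal (a i) (b i) (not_a_le_b i)

theorem isLocalRealizer_realizer : IsLocalRealizer (realizer n) := by
  refine ⟨fun x y hxy => ⟨0, trivial, trivial, rankW_monotone hxy.le⟩, fun x y hxy hyx => ?_⟩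
  by_cases hW : rankW y ≤ rankW x
  · exact ⟨0, trivial, trivial, hW⟩
  by_cases hZ : rankZ y ≤ rankZ x
  · exact ⟨1, trivial, trivial, hZ⟩
  obtain ⟨i, rfl, rfl⟩ :=
    (le_or_exists_eq_a_b_of_rank_lt (not_le.mp hW) (not_le.mp hZ)).resolve_left hxy
  exact ⟨i.succ.succ, by simp [realizer, PLE.reversal]⟩

theorem mu_realizer_le (u : KElt n) : mu (realizer n) u ≤ 3 := by
  have hrev : mu (fun i => PLE.reversal (a i) (b i) (not_a_le_b i)) u ≤ 1 :=
    mu_le_one_of_pairwise_disjoint (fun i j hij => by simpa [PLE.reversal] using hij.symm) u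
  grw [realizer, mu_cons_le, mu_cons_le, hrev]

end KElt

/-- The local dimension of the Kelly poset `K_n` equals `3` for `n ≥ 3`. -/
theorem localDim_kelly_eq_three (n : ℕ) (hn : 3 ≤ n) :
    localDim (KElt n) = 3 := by
  refine localDim_eq_of_isLocalRealizer_of_forall three_pos (KElt.realizer n)
    KElt.isLocalRealizer_realizer KElt.mu_realizer_le fun _ L hL => ?_
  obtain ⟨i, hi⟩ := hL.exists_three_le_mu (fun i => .a (Fin.castLE hn i))
    (fun i => .b (Fin.castLE hn i)) (fun i j hij => KElt.a_le_b (by simpa using hij))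
    (fun i j hij => by simpa [KElt.le_iff_leByIndex, KElt.LeByIndex] using hij)
    (fun i => KElt.not_a_le_b _)
  exact ⟨_, hi⟩
end

section
/- If a finite poset P has local dimension at most 2 (i.e., P has a local realizer 𝓛 with μ(u,𝓛) ≤ 2 for every element u), then P has Dushnik–Miller dimension at most 2 (i.e., P has a realizer consisting of at most 2 linear extensions). -/
/-- A linear extension of the poset `α`. -/
structure LinExt (α : Type*) [PartialOrder α] where
  rel : α → α → Prop
  refl : ∀ x, rel x x
  antisymm : ∀ x y, rel x y → rel y x → x = y
  trans : ∀ x y z, rel x y → rel y z → rel x z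
  total : ∀ x y, rel x y ∨ rel y x
  extends_le : ∀ x y : α, x ≤ y → rel x y

/-- A (nonempty) family of linear extensions is a realizer when every incomparable
pair is reversed by some member. -/
def IsRealizer {α : Type*} [PartialOrder α] {m : ℕ} (R : Fin m → LinExt α) : Prop :=
  0 < m ∧ ∀ x y : α, ¬ x ≤ y → ¬ y ≤ x → ∃ i, (R i).rel y x

/-- The Dushnik–Miller dimension. -/
noncomputable def dimDM (α : Type*) [PartialOrder α] : ℕ :=
  sInf {d : ℕ | 0 < d ∧ ∃ R : Fin d → LinExt α, IsRealizer R}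

/-!
A poset has dimension at most `2` as soon as its incomparable pairs admit a transitive
orientation `q`: then `≤ ∪ q` and `≤ ∪ q⁻¹` are partial orders, and linear extensions of the
two reverse every incomparable pair between them.

From a local realizer `L` with `μ(u, L) ≤ 2` such an orientation is read off as follows. An
incomparable pair `x, y` lies in a member of `L` ordering it each way; orient `x → y` when the
member with `x` below `y` comes first in `L`. If `x → y → z`, the two members containing `y` are
then the same two for both pairs, with the same roles, so they contain `x` and `z` and order
them as `x, y, z` and `z, y, x` respectively: hence `x → z`.
-/

section TransitiveOrientation

variable {α : Type*} [PartialOrder α]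

/-- A transitive orientation of the incomparability graph of `α`. -/
structure IsTransitiveOrientation (q : α → α → Prop) : Prop where
  trans : ∀ x y z, q x y → q y z → q x z
  incomp : ∀ x y, q x y → ¬ x ≤ y ∧ ¬ y ≤ x
  total : ∀ x y, ¬ x ≤ y → ¬ y ≤ x → q x y ∨ q y x

namespace IsTransitiveOrientation

variable {q : α → α → Prop}

theorem swap (hq : IsTransitiveOrientation q) : IsTransitiveOrientation (Function.swap q) where
  trans x y z hxy hyz := hq.trans z y x hyz hxy
  incomp x y h := (hq.incomp y x h).symm
  total x y hxy hyx := (hq.total x y hxy hyx).symm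

theorem isPartialOrder_le_or (hq : IsTransitiveOrientation q) :
    IsPartialOrder α (fun x y => x ≤ y ∨ q x y) where
  refl x := Or.inl le_rfl
  trans := by
    rintro x y z (hxy | hxy) (hyz | hyz)
    · exact Or.inl (hxy.trans hyz)
    · by_cases hxz : x ≤ z
      · exact Or.inl hxz
      have hzx : ¬ z ≤ x := fun hzx => (hq.incomp y z hyz).2 (hzx.trans hxy)
      rcases hq.total x z hxz hzx with hqxz | hqzx
      · exact Or.inr hqxz
      · exact absurd hxy (hq.incomp y x (hq.trans y z x hyz hqzx)).2
    · by_cases hxz : x ≤ z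
      · exact Or.inl hxz
      have hzx : ¬ z ≤ x := fun hzx => (hq.incomp x y hxy).2 (hyz.trans hzx)
      rcases hq.total x z hxz hzx with hqxz | hqzx
      · exact Or.inr hqxz
      · exact absurd hyz (hq.incomp z y (hq.trans z x y hqzx hxy)).2
    · exact Or.inr (hq.trans x y z hxy hyz)
  antisymm := by
    rintro x y (hxy | hxy) (hyx | hyx)
    · exact le_antisymm hxy hyx
    · exact absurd hxy (hq.incomp y x hyx).2
    · exact absurd hyx (hq.incomp x y hxy).2
    · exact absurd le_rfl (hq.incomp x x (hq.trans x y x hxy hyx)).1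

theorem exists_linExt (hq : IsTransitiveOrientation q) :
    ∃ E : LinExt α, ∀ x y, q x y → E.rel x y := by
  have := hq.isPartialOrder_le_or
  obtain ⟨s, hs, hle⟩ := extend_partialOrder (fun x y => x ≤ y ∨ q x y)
  exact ⟨⟨s, refl_of s, fun _ _ => antisymm, fun _ _ _ => _root_.trans, total_of s,
    fun x y h => hle x y (Or.inl h)⟩, fun x y h => hle x y (Or.inr h)⟩

theorem exists_realizer_two (hq : IsTransitiveOrientation q) :
    ∃ R : Fin 2 → LinExt α, IsRealizer R := by
  obtain ⟨E, hE⟩ := hq.exists_linExt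
  obtain ⟨F, hF⟩ := hq.swap.exists_linExt
  refine ⟨![E, F], two_pos, fun x y hxy hyx => ?_⟩
  rcases hq.total x y hxy hyx with h | h
  · exact ⟨1, hF y x h⟩
  · exact ⟨0, hE y x h⟩

end IsTransitiveOrientation

end TransitiveOrientation

namespace PLE

variable {α : Type*} [PartialOrder α] (E : PLE α)

def Below (x y : α) : Prop :=
  x ∈ E.dom ∧ y ∈ E.dom ∧ E.rel x y

variable {E} {x y z : α}

theorem Below.trans (hxy : E.Below x y) (hyz : E.Below y z) : E.Below x z :=
  ⟨hxy.1, hyz.2.1, E.trans x hxy.1 y hxy.2.1 z hyz.2.1 hxy.2.2 hyz.2.2⟩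

theorem Below.antisymm (hxy : E.Below x y) (hyx : E.Below y x) : x = y :=
  E.antisymm x hxy.1 y hxy.2.1 hxy.2.2 hyx.2.2

theorem Below.not_le (hyx : E.Below y x) (hne : x ≠ y) : ¬ x ≤ y := fun hle =>
  hne (E.antisymm x hyx.2.1 y hyx.1 (E.extends_le x hyx.2.1 y hyx.1 hle) hyx.2.2)

end PLE

section LocalRealizer

variable {α : Type*} [PartialOrder α] {m : ℕ} {L : Fin m → PLE α}

theorem eq_or_eq_of_mu_le_two {u : α} (hmu : mu L u ≤ 2) {i j k : Fin m} (hij : i ≠ j)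
    (hi : u ∈ (L i).dom) (hj : u ∈ (L j).dom) (hk : u ∈ (L k).dom) : k = i ∨ k = j := by
  have hsub : ({i, j} : Set (Fin m)) ⊆ {k | u ∈ (L k).dom} := by
    rintro k (rfl | rfl) <;> assumption
  have hcard : {k | u ∈ (L k).dom}.ncard ≤ ({i, j} : Set (Fin m)).ncard := by
    rw [Set.ncard_pair hij]
    exact hmu
  have heq := Set.eq_of_subset_of_ncard_le hsub hcard (Set.toFinite _)
  have hk' : k ∈ ({i, j} : Set (Fin m)) := heq ▸ hk
  simpa using hk'

theorem eq_and_eq_of_mu_le_two {u : α} (hmu : mu L u ≤ 2) {i j i' j' : Fin m}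
    (hij : i < j) (hij' : i' < j') (hi : u ∈ (L i).dom) (hj : u ∈ (L j).dom)
    (hi' : u ∈ (L i').dom) (hj' : u ∈ (L j').dom) : i = i' ∧ j = j' := by
  have := eq_or_eq_of_mu_le_two hmu hij.ne hi hj hi'
  have := eq_or_eq_of_mu_le_two hmu hij.ne hi hj hj'
  omega

def BelowThenAbove (L : Fin m → PLE α) (x y : α) : Prop :=
  x ≠ y ∧ ∃ i j, i < j ∧ (L i).Below x y ∧ (L j).Below y x

theorem BelowThenAbove.incomp {x y : α} (h : BelowThenAbove L x y) : ¬ x ≤ y ∧ ¬ y ≤ x := by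
  obtain ⟨hne, i, j, -, hi, hj⟩ := h
  exact ⟨hj.not_le hne, hi.not_le hne.symm⟩

theorem BelowThenAbove.trans (hmu : ∀ u, mu L u ≤ 2) {x y z : α}
    (hxy : BelowThenAbove L x y) (hyz : BelowThenAbove L y z) : BelowThenAbove L x z := by
  obtain ⟨hnexy, i, j, hij, hi, hj⟩ := hxy
  obtain ⟨-, i', j', hij', hi', hj'⟩ := hyz
  obtain ⟨rfl, rfl⟩ :=
    eq_and_eq_of_mu_le_two (hmu y) hij hij' hi.2.1 hj.1 hi'.1 hj'.2.1
  have hnexz : x ≠ z := by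
    rintro rfl
    exact hnexy (hi.antisymm hi')
  exact ⟨hnexz, i, j, hij, hi.trans hi', hj'.trans hj⟩

theorem BelowThenAbove.total (hL : IsLocalRealizer L) {x y : α} (hxy : ¬ x ≤ y)
    (hyx : ¬ y ≤ x) : BelowThenAbove L x y ∨ BelowThenAbove L y x := by
  have hne : x ≠ y := fun h => hxy h.le
  obtain ⟨i, hyi, hxi, hi⟩ := hL.2 y x hyx hxy
  obtain ⟨j, hxj, hyj, hj⟩ := hL.2 x y hxy hyx
  replace hi : (L i).Below x y := ⟨hxi, hyi, hi⟩
  replace hj : (L j).Below y x := ⟨hyj, hxj, hj⟩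
  rcases lt_or_gt_of_ne (show i ≠ j by rintro rfl; exact hne (hi.antisymm hj))
    with hij | hji
  · exact Or.inl ⟨hne, i, j, hij, hi, hj⟩
  · exact Or.inr ⟨hne.symm, j, i, hji, hj, hi⟩

theorem isTransitiveOrientation_belowThenAbove (hL : IsLocalRealizer L)
    (hmu : ∀ u, mu L u ≤ 2) : IsTransitiveOrientation (BelowThenAbove L) where
  trans _ _ _ := BelowThenAbove.trans hmu
  incomp _ _ := BelowThenAbove.incomp
  total _ _ := BelowThenAbove.total hL

end LocalRealizer

theorem dim_le_two_of_localDim_le_two_general (α : Type*) [PartialOrder α]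
    (h : ∃ (m : ℕ) (L : Fin m → PLE α), IsLocalRealizer L ∧ ∀ u : α, mu L u ≤ 2) :
    ∃ R : Fin 2 → LinExt α, IsRealizer R := by
  obtain ⟨m, L, hL, hmu⟩ := h
  exact (isTransitiveOrientation_belowThenAbove hL hmu).exists_realizer_two

/-- A poset with a local realizer of width at most `2` has a realizer of size `2`. -/
theorem dim_le_two_of_localDim_le_two (α : Type*) [Fintype α] [PartialOrder α]
    (h : ∃ (m : ℕ) (L : Fin m → PLE α), IsLocalRealizer L ∧ ∀ u : α, mu L u ≤ 2) :
    ∃ R : Fin 2 → LinExt α, IsRealizer R :=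
  dim_le_two_of_localDim_le_two_general α h
end

section
/- If a finite poset P has Boolean dimension at most 2, then P has Dushnik–Miller dimension at most 2. -/
/-- A linear order on the ground set `α` (not necessarily an extension of the partial order). -/
structure LinOrdOn (α : Type*) where
  rel : α → α → Prop
  refl : ∀ x, rel x x
  antisymm : ∀ x y, rel x y → rel y x → x = y
  trans : ∀ x y z, rel x y → rel y z → rel x z
  total : ∀ x y, rel x y ∨ rel y x

/-- `(𝓑, τ)` is a Boolean realizer: for distinct `x, y`, `x < y` in the poset iff `τ`
evaluates to true on the bit string whose `i`-th coordinate records whether `x < y`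
in the linear order `B i`. -/
def IsBooleanRealizer {α : Type*} [PartialOrder α] {d : ℕ}
    (B : Fin d → LinOrdOn α) (τ : (Fin d → Prop) → Prop) : Prop :=
  ∀ x y : α, x ≠ y → (x < y ↔ τ (fun i => (B i).rel x y ∧ x ≠ y))

/-- The Boolean dimension. -/
noncomputable def boolDim (α : Type*) [PartialOrder α] : ℕ :=
  sInf {d : ℕ | 0 < d ∧ ∃ B : Fin d → LinOrdOn α, ∃ τ : (Fin d → Prop) → Prop,
    IsBooleanRealizer B τ}

section Aux
variable {α : Type*} [PartialOrder α]

/-- Every partial order has a linear extension (Szpilrajn). -/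
lemma exists_linExt : Nonempty (LinExt α) := by
  obtain ⟨s, hlin, hle⟩ := extend_partialOrder ((· ≤ ·) : α → α → Prop)
  haveI := hlin
  exact ⟨⟨s, fun x => refl_of s x, fun x y h h' => antisymm_of s h h',
    fun x y z h h' => trans_of s h h', fun x y => total_of s x y,
    fun x y hxy => hle x y hxy⟩⟩

/-- For every pair there is a linear extension reversing it if incomparable. -/
lemma exists_linExt_rev (x y : α) :
    ∃ L : LinExt α, (¬ x ≤ y → ¬ y ≤ x → L.rel y x) := by
  by_cases hinc : ¬ x ≤ y ∧ ¬ y ≤ x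
  · obtain ⟨hxy, hyx⟩ := hinc
    set r : α → α → Prop := fun a b => a ≤ b ∨ (a ≤ y ∧ x ≤ b) with hr
    haveI : IsPartialOrder α r := by
      refine { refl := fun a => Or.inl le_rfl, trans := ?_, antisymm := ?_ }
      · rintro a b c (hab | ⟨hay, hxb⟩) (hbc | ⟨hby, hxc⟩)
        · exact Or.inl (hab.trans hbc)
        · exact Or.inr ⟨hab.trans hby, hxc⟩
        · exact Or.inr ⟨hay, hxb.trans hbc⟩
        · exact absurd (hxb.trans hby) hxy
      · rintro a b (hab | ⟨hay, hxb⟩) (hba | ⟨hby, hxa⟩)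
        · exact le_antisymm hab hba
        · exact absurd ((hxa.trans hab).trans hby) hxy
        · exact absurd ((hxb.trans hba).trans hay) hxy
        · exact absurd (hxb.trans hby) hxy
    obtain ⟨s, hlin, hle⟩ := extend_partialOrder r
    haveI := hlin
    refine ⟨⟨s, fun a => refl_of s a, fun a b h h' => antisymm_of s h h',
      fun a b c h h' => trans_of s h h', fun a b => total_of s a b,
      fun a b hab => hle a b (Or.inl hab)⟩, fun _ _ => ?_⟩
    exact hle y x (Or.inr ⟨le_rfl, le_rfl⟩)
  · obtain ⟨L⟩ := (exists_linExt (α := α))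
    exact ⟨L, fun h h' => absurd ⟨h, h'⟩ hinc⟩

/-- An antichain has DM dimension at most 2. -/
lemma dimDM_le_two_of_antichain (h : ∀ x y : α, ¬ x < y) : dimDM α ≤ 2 := by
  obtain ⟨L⟩ := (exists_linExt (α := α))
  let hrev : LinExt α := ⟨fun a b => L.rel b a, L.refl,
    fun a b h1 h2 => (L.antisymm a b h2 h1),
    fun a b c h1 h2 => L.trans c b a h2 h1,
    fun a b => (L.total b a),
    fun a b hab => by
      have : a = b := by
        rcases eq_or_lt_of_le hab with h' | h'
        · exact h'
        · exact absurd h' (h a b)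
      subst this; exact L.refl a⟩
  apply Nat.sInf_le
  refine ⟨by norm_num, ![L, hrev], by norm_num, fun x y hxy hyx => ?_⟩
  rcases L.total y x with h1 | h1
  · exact ⟨0, h1⟩
  · exact ⟨1, by simp only [Matrix.cons_val_one, Matrix.head_cons]; exact h1⟩

/-- A linear poset has DM dimension at most 2. -/
lemma dimDM_le_two_of_linear (h : ∀ x y : α, x ≠ y → x < y ∨ y < x) : dimDM α ≤ 2 := by
  obtain ⟨L⟩ := (exists_linExt (α := α))
  apply Nat.sInf_le
  refine ⟨by norm_num, ![L, L], by norm_num, fun x y hxy hyx => ?_⟩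
  have hne : x ≠ y := fun he => hxy (he ▸ le_rfl)
  rcases h x y hne with h' | h'
  · exact absurd h'.le hxy
  · exact absurd h'.le hyx

end Aux

section Aux2
variable {α : Type*} [PartialOrder α]

def LinExt.toLin (L : LinExt α) : LinOrdOn α :=
  ⟨L.rel, L.refl, L.antisymm, L.trans, L.total⟩

lemma boolDim_set_nonempty (α : Type*) [Fintype α] [PartialOrder α] :
    {d : ℕ | 0 < d ∧ ∃ B : Fin d → LinOrdOn α, ∃ τ : (Fin d → Prop) → Prop,
      IsBooleanRealizer B τ}.Nonempty := by
  classical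
  obtain ⟨L0⟩ := (exists_linExt (α := α))
  choose f hf using fun p : α × α => exists_linExt_rev p.1 p.2
  set n := Fintype.card (α × α) with hn
  set e := Fintype.equivFin (α × α) with he
  refine ⟨n + 1, Nat.succ_pos n, fun i => if h : (i : ℕ) < n then (f (e.symm ⟨i, h⟩)).toLin
    else L0.toLin, fun g => ∀ i, g i, fun x y hne => ?_⟩
  constructor
  · intro hlt i
    refine ⟨?_, hne⟩
    by_cases h : (i : ℕ) < n
    · simp only [dif_pos h]
      exact (f (e.symm ⟨i, h⟩)).extends_le x y hlt.le
    · simp only [dif_neg h]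
      exact L0.extends_le x y hlt.le
  · intro hall
    by_cases hxy : x ≤ y
    · exact lt_of_le_of_ne hxy hne
    · exfalso
      by_cases hyx : y ≤ x
      · -- y < x, so every linear extension has rel y x; combined with rel x y get x = y
        have h0 := hall ⟨(e (x, y) : ℕ), Nat.lt_succ_of_lt (e (x, y)).isLt⟩
        have h1 := hall ⟨n, Nat.lt_succ_self n⟩
        simp only [lt_irrefl, dif_neg] at h1
        exact hne (L0.antisymm x y h1.1 (L0.extends_le y x hyx))
      · -- incomparable: use the slot for pair (x,y)
        have h0 := hall ⟨(e (x, y) : ℕ), Nat.lt_succ_of_lt (e (x, y)).isLt⟩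
        have hlt' : ((⟨(e (x, y) : ℕ), Nat.lt_succ_of_lt (e (x, y)).isLt⟩ : Fin (n+1)) : ℕ) < n :=
          (e (x, y)).isLt
        simp only [dif_pos hlt'] at h0
        have heq : e.symm ⟨(e (x, y) : ℕ), hlt'⟩ = (x, y) := by
          rw [show (⟨(e (x, y) : ℕ), hlt'⟩ : Fin n) = e (x, y) from Fin.ext rfl,
            Equiv.symm_apply_apply]
        rw [heq] at h0
        have := hf (x, y) hxy hyx
        exact hne ((f (x, y)).antisymm x y h0.1 this)

/-- Extract a size-2 Boolean realizer from `boolDim α ≤ 2`. -/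
lemma exists_realizer_two (α : Type*) [Fintype α] [PartialOrder α] (h : boolDim α ≤ 2) :
    ∃ B : Fin 2 → LinOrdOn α, ∃ τ : (Fin 2 → Prop) → Prop, IsBooleanRealizer B τ := by
  classical
  obtain ⟨d, hle, hpos, B, τ, hB⟩ :
      ∃ d, d ≤ 2 ∧ 0 < d ∧ ∃ B : Fin d → LinOrdOn α, ∃ τ : (Fin d → Prop) → Prop,
        IsBooleanRealizer B τ := ⟨boolDim α, h, Nat.sInf_mem (boolDim_set_nonempty α)⟩
  -- pad to size 2
  have hmod : ∀ j : Fin 2, (j : ℕ) % d < d := fun j => Nat.mod_lt _ hpos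
  refine ⟨fun j => B ⟨(j : ℕ) % d, hmod j⟩,
    fun g => τ (fun i => g ⟨(i : ℕ), lt_of_lt_of_le i.isLt hle⟩), fun x y hne => ?_⟩
  rw [hB x y hne]
  have : (fun i : Fin d => (B i).rel x y ∧ x ≠ y) =
      (fun i : Fin d =>
        (B ⟨((⟨(i : ℕ), lt_of_lt_of_le i.isLt hle⟩ : Fin 2) : ℕ) % d, hmod _⟩).rel x y ∧ x ≠ y) := by
    funext i
    have hi : (⟨((⟨(i : ℕ), lt_of_lt_of_le i.isLt hle⟩ : Fin 2) : ℕ) % d, hmod _⟩ : Fin d) = i :=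
      Fin.ext (Nat.mod_eq_of_lt i.isLt)
    rw [hi]
  exact iff_of_eq (congrArg τ this)

end Aux2

section Main
variable {α : Type*} [PartialOrder α]

/-- Bundle of data extracted from a size-2 Boolean realizer: two strict linear orders
`s0, s1` and the four values of the Boolean function, with the compatibility laws. -/
structure BR2 (α : Type*) [PartialOrder α] where
  s0 : α → α → Prop
  s1 : α → α → Prop
  a : Prop
  b : Prop
  c : Prop
  d : Prop
  tr0 : ∀ x y z, s0 x y → s0 y z → s0 x z
  tr1 : ∀ x y z, s1 x y → s1 y z → s1 x z
  as0 : ∀ x y, s0 x y → ¬ s0 y x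
  as1 : ∀ x y, s1 x y → ¬ s1 y x
  tot0 : ∀ x y : α, x ≠ y → s0 x y ∨ s0 y x
  tot1 : ∀ x y : α, x ≠ y → s1 x y ∨ s1 y x
  h1 : ∀ x y : α, x ≠ y → s0 x y → s1 x y → (x < y ↔ a)
  h2 : ∀ x y : α, x ≠ y → s0 x y → ¬ s1 x y → (x < y ↔ b)
  h3 : ∀ x y : α, x ≠ y → ¬ s0 x y → s1 x y → (x < y ↔ c)
  h4 : ∀ x y : α, x ≠ y → ¬ s0 x y → ¬ s1 x y → (x < y ↔ d)

namespace BR2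

variable (E : BR2 α)

/-- Reverse the first linear order. -/
def flip0 : BR2 α where
  s0 := fun x y => E.s0 y x
  s1 := E.s1
  a := E.c
  b := E.d
  c := E.a
  d := E.b
  tr0 := fun x y z h h' => E.tr0 z y x h' h
  tr1 := E.tr1
  as0 := fun x y h h' => E.as0 y x h h'
  as1 := E.as1
  tot0 := fun x y hne => (E.tot0 y x hne.symm)
  tot1 := E.tot1
  h1 := fun x y hne hs0 hs1 => E.h3 x y hne (E.as0 y x hs0) hs1
  h2 := fun x y hne hs0 hs1 => E.h4 x y hne (E.as0 y x hs0) hs1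
  h3 := fun x y hne hs0 hs1 => E.h1 x y hne
    ((E.tot0 x y hne).resolve_right hs0) hs1
  h4 := fun x y hne hs0 hs1 => E.h2 x y hne
    ((E.tot0 x y hne).resolve_right hs0) hs1

/-- Reverse the second linear order. -/
def flip1 : BR2 α where
  s0 := E.s0
  s1 := fun x y => E.s1 y x
  a := E.b
  b := E.a
  c := E.d
  d := E.c
  tr0 := E.tr0
  tr1 := fun x y z h h' => E.tr1 z y x h' h
  as0 := E.as0
  as1 := fun x y h h' => E.as1 y x h h'
  tot0 := E.tot0
  tot1 := fun x y hne => (E.tot1 y x hne.symm)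
  h1 := fun x y hne hs0 hs1 => E.h2 x y hne hs0 (E.as1 y x hs1)
  h2 := fun x y hne hs0 hs1 => E.h1 x y hne hs0
    ((E.tot1 x y hne).resolve_right hs1)
  h3 := fun x y hne hs0 hs1 => E.h4 x y hne hs0 (E.as1 y x hs1)
  h4 := fun x y hne hs0 hs1 => E.h3 x y hne hs0
    ((E.tot1 x y hne).resolve_right hs1)

/-- Swap the two linear orders. -/
def swap : BR2 α where
  s0 := E.s1
  s1 := E.s0
  a := E.a
  b := E.c
  c := E.b
  d := E.d
  tr0 := E.tr1
  tr1 := E.tr0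
  as0 := E.as1
  as1 := E.as0
  tot0 := E.tot1
  tot1 := E.tot0
  h1 := fun x y hne hs0 hs1 => E.h1 x y hne hs1 hs0
  h2 := fun x y hne hs0 hs1 => E.h3 x y hne hs1 hs0
  h3 := fun x y hne hs0 hs1 => E.h2 x y hne hs1 hs0
  h4 := fun x y hne hs0 hs1 => E.h4 x y hne hs1 hs0

/-- Scenario ∅ : the poset is an antichain. -/
lemma S0 (ha : ¬E.a) (hb : ¬E.b) (hc : ¬E.c) (hd : ¬E.d) : dimDM α ≤ 2 := by
  apply dimDM_le_two_of_antichain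
  intro x y hlt
  have hne : x ≠ y := hlt.ne
  by_cases hs0 : E.s0 x y <;> by_cases hs1 : E.s1 x y
  · exact ha ((E.h1 x y hne hs0 hs1).1 hlt)
  · exact hb ((E.h2 x y hne hs0 hs1).1 hlt)
  · exact hc ((E.h3 x y hne hs0 hs1).1 hlt)
  · exact hd ((E.h4 x y hne hs0 hs1).1 hlt)

/-- Scenario {TT} : the poset is the intersection of two linear orders. -/
lemma S1 (ha : E.a) (hb : ¬E.b) (hc : ¬E.c) (hd : ¬E.d) : dimDM α ≤ 2 := by
  have key : ∀ x y : α, x ≠ y → (x < y ↔ E.s0 x y ∧ E.s1 x y) := by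
    intro x y hne
    constructor
    · intro hlt
      by_cases hs0 : E.s0 x y <;> by_cases hs1 : E.s1 x y
      · exact ⟨hs0, hs1⟩
      · exact absurd ((E.h2 x y hne hs0 hs1).1 hlt) hb
      · exact absurd ((E.h3 x y hne hs0 hs1).1 hlt) hc
      · exact absurd ((E.h4 x y hne hs0 hs1).1 hlt) hd
    · rintro ⟨hs0, hs1⟩
      exact (E.h1 x y hne hs0 hs1).2 ha
  classical
  let L0 : LinExt α :=
    { rel := fun x y => E.s0 x y ∨ x = y
      refl := fun x => Or.inr rfl
      antisymm := by
        rintro x y (h | h) (h' | h')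
        · exact absurd h' (E.as0 x y h)
        · exact h'.symm
        · exact h
        · exact h
      trans := by
        rintro x y z (h | h) (h' | h')
        · exact Or.inl (E.tr0 x y z h h')
        · exact h' ▸ Or.inl h
        · exact Or.inl (h ▸ h')
        · exact Or.inr (h.trans h')
      total := fun x y => by
        by_cases hne : x = y
        · exact Or.inl (Or.inr hne)
        · rcases E.tot0 x y hne with h | h
          · exact Or.inl (Or.inl h)
          · exact Or.inr (Or.inl h)
      extends_le := fun x y hle => by
        rcases eq_or_lt_of_le hle with h | h
        · exact Or.inr h
        · exact Or.inl ((key x y h.ne).1 h).1 }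
  let L1 : LinExt α :=
    { rel := fun x y => E.s1 x y ∨ x = y
      refl := fun x => Or.inr rfl
      antisymm := by
        rintro x y (h | h) (h' | h')
        · exact absurd h' (E.as1 x y h)
        · exact h'.symm
        · exact h
        · exact h
      trans := by
        rintro x y z (h | h) (h' | h')
        · exact Or.inl (E.tr1 x y z h h')
        · exact h' ▸ Or.inl h
        · exact Or.inl (h ▸ h')
        · exact Or.inr (h.trans h')
      total := fun x y => by
        by_cases hne : x = y
        · exact Or.inl (Or.inr hne)
        · rcases E.tot1 x y hne with h | h
          · exact Or.inl (Or.inl h)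
          · exact Or.inr (Or.inl h)
      extends_le := fun x y hle => by
        rcases eq_or_lt_of_le hle with h | h
        · exact Or.inr h
        · exact Or.inl ((key x y h.ne).1 h).2 }
  apply Nat.sInf_le
  refine ⟨by norm_num, ![L0, L1], by norm_num, fun x y hxy hyx => ?_⟩
  have hne : x ≠ y := fun he => hxy (he ▸ le_rfl)
  rcases E.tot0 x y hne with h0 | h0
  · have hns1 : ¬ E.s1 x y := fun hs1 => hxy ((key x y hne).2 ⟨h0, hs1⟩).le
    rcases E.tot1 x y hne with h1 | h1
    · exact absurd h1 hns1
    · exact ⟨1, by simp only [Matrix.cons_val_one, Matrix.head_cons]; exact Or.inl h1⟩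
  · exact ⟨0, by simp only [Matrix.cons_val_zero]; exact Or.inl h0⟩

/-- Scenario {TT, TF} : the poset is a linear order (it is the strict order `s0`). -/
lemma S2 (ha : E.a) (hb : E.b) (hc : ¬E.c) (hd : ¬E.d) : dimDM α ≤ 2 := by
  apply dimDM_le_two_of_linear
  intro x y hne
  rcases E.tot0 x y hne with h0 | h0
  · left
    by_cases hs1 : E.s1 x y
    · exact (E.h1 x y hne h0 hs1).2 ha
    · exact (E.h2 x y hne h0 hs1).2 hb
  · right
    by_cases hs1 : E.s1 y x
    · exact (E.h1 y x hne.symm h0 hs1).2 ha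
    · exact (E.h2 y x hne.symm h0 hs1).2 hb

/-- Scenario {TT, FF} : the poset is an antichain. -/
lemma S3 (ha : E.a) (hb : ¬E.b) (hc : ¬E.c) (hd : E.d) : dimDM α ≤ 2 := by
  apply dimDM_le_two_of_antichain
  intro x y hlt
  have hne : x ≠ y := hlt.ne
  by_cases hs0 : E.s0 x y <;> by_cases hs1 : E.s1 x y
  · have : y < x := (E.h4 y x hne.symm (E.as0 x y hs0) (E.as1 x y hs1)).2 hd
    exact lt_asymm hlt this
  · exact hb ((E.h2 x y hne hs0 hs1).1 hlt)
  · exact hc ((E.h3 x y hne hs0 hs1).1 hlt)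
  · have : y < x := (E.h1 y x hne.symm ((E.tot0 x y hne).resolve_left hs0)
      ((E.tot1 x y hne).resolve_left hs1)).2 ha
    exact lt_asymm hlt this

/-- Scenario {TT, TF, FT} : the poset is a linear order. -/
lemma S4 (ha : E.a) (hb : E.b) (hc : E.c) (hd : ¬E.d) : dimDM α ≤ 2 := by
  have claim : ∀ x y : α, x ≠ y → E.s0 x y → E.s1 x y := by
    intro x y hne hs0
    by_contra hs1
    have hxy : x < y := (E.h2 x y hne hs0 hs1).2 hb
    have hyx : y < x := (E.h3 y x hne.symm (E.as0 x y hs0)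
      ((E.tot1 x y hne).resolve_left hs1)).2 hc
    exact lt_asymm hxy hyx
  apply dimDM_le_two_of_linear
  intro x y hne
  rcases E.tot0 x y hne with h0 | h0
  · exact Or.inl ((E.h1 x y hne h0 (claim x y hne h0)).2 ha)
  · exact Or.inr ((E.h1 y x hne.symm h0 (claim y x hne.symm h0)).2 ha)

/-- Scenario all-true : there are no two distinct elements; an antichain. -/
lemma S5 (ha : E.a) (hb : E.b) (hc : E.c) (hd : E.d) : dimDM α ≤ 2 := by
  have claim : ∀ x y : α, x ≠ y → x < y := by
    intro x y hne
    by_cases hs0 : E.s0 x y <;> by_cases hs1 : E.s1 x y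
    · exact (E.h1 x y hne hs0 hs1).2 ha
    · exact (E.h2 x y hne hs0 hs1).2 hb
    · exact (E.h3 x y hne hs0 hs1).2 hc
    · exact (E.h4 x y hne hs0 hs1).2 hd
  apply dimDM_le_two_of_antichain
  intro x y hlt
  exact lt_asymm hlt (claim y x hlt.ne.symm)

end BR2

end Main

lemma funext2_pat {p : Fin 2 → Prop} {a b : Prop} (h0 : p 0 ↔ a) (h1 : p 1 ↔ b) :
    p = (fun i : Fin 2 => if i = 0 then a else b) := by
  funext i
  fin_cases i
  · simpa using propext h0
  · simpa using propext h1


/-- Boolean dimension at most `2` implies Dushnik–Miller dimension at most `2`. -/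
theorem dimDM_le_two_of_boolDim_le_two (α : Type*) [Fintype α] [PartialOrder α]
    (h : boolDim α ≤ 2) : dimDM α ≤ 2 := by
  classical
  obtain ⟨B, τ, hB⟩ := exists_realizer_two α h
  have key : ∀ (p0 p1 : Prop) (x y : α), x ≠ y →
      ((B 0).rel x y ∧ x ≠ y ↔ p0) → ((B 1).rel x y ∧ x ≠ y ↔ p1) →
      (x < y ↔ τ (fun i : Fin 2 => if i = 0 then p0 else p1)) := by
    intro p0 p1 x y hne h0 h1
    rw [hB x y hne, funext2_pat (p := fun i => (B i).rel x y ∧ x ≠ y) h0 h1]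
  have str : ∀ (i : Fin 2), (∀ x y z : α, ((B i).rel x y ∧ x ≠ y) → ((B i).rel y z ∧ y ≠ z) →
      ((B i).rel x z ∧ x ≠ z)) ∧ (∀ x y : α, ((B i).rel x y ∧ x ≠ y) → ¬ ((B i).rel y x ∧ y ≠ x))
      ∧ (∀ x y : α, x ≠ y → ((B i).rel x y ∧ x ≠ y) ∨ ((B i).rel y x ∧ y ≠ x)) := by
    intro i
    refine ⟨fun x y z ⟨hxy, hnexy⟩ ⟨hyz, hneyz⟩ => ⟨(B i).trans x y z hxy hyz, fun he => ?_⟩,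
      fun x y ⟨hxy, hne⟩ ⟨hyx, _⟩ => hne ((B i).antisymm x y hxy hyx),
      fun x y hne => ?_⟩
    · subst he
      exact hnexy ((B i).antisymm x y hxy hyz)
    · rcases (B i).total x y with h' | h'
      · exact Or.inl ⟨h', hne⟩
      · exact Or.inr ⟨h', hne.symm⟩
  have E : BR2 α :=
    { s0 := fun x y => (B 0).rel x y ∧ x ≠ y
      s1 := fun x y => (B 1).rel x y ∧ x ≠ y
      a := τ (fun i : Fin 2 => if i = 0 then True else True)
      b := τ (fun i : Fin 2 => if i = 0 then True else False)
      c := τ (fun i : Fin 2 => if i = 0 then False else True)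
      d := τ (fun i : Fin 2 => if i = 0 then False else False)
      tr0 := (str 0).1
      tr1 := (str 1).1
      as0 := (str 0).2.1
      as1 := (str 1).2.1
      tot0 := (str 0).2.2
      tot1 := (str 1).2.2
      h1 := fun x y hne hs0 hs1 => key True True x y hne
        (iff_of_true hs0 trivial) (iff_of_true hs1 trivial)
      h2 := fun x y hne hs0 hs1 => key True False x y hne
        (iff_of_true hs0 trivial) (iff_false_intro hs1)
      h3 := fun x y hne hs0 hs1 => key False True x y hne
        (iff_false_intro hs0) (iff_of_true hs1 trivial)
      h4 := fun x y hne hs0 hs1 => key False False x y hne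
        (iff_false_intro hs0) (iff_false_intro hs1) }
  by_cases ha : E.a <;> by_cases hb : E.b <;> by_cases hc : E.c <;> by_cases hd : E.d
  · exact E.S5 ha hb hc hd
  · exact E.S4 ha hb hc hd
  · exact E.flip1.S4 hb ha hd hc
  · exact E.S2 ha hb hc hd
  · exact E.flip0.S4 hc hd ha hb
  · exact E.swap.S2 ha hc hb hd
  · exact E.S3 ha hb hc hd
  · exact E.S1 ha hb hc hd
  · exact E.flip0.flip1.S4 hd hc hb ha
  · exact E.flip1.S3 hb ha hd hc
  · exact E.flip1.swap.S2 hb hd ha hc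
  · exact E.flip1.S1 hb ha hd hc
  · exact E.flip0.S2 hc hd ha hb
  · exact E.flip0.S1 hc hd ha hb
  · exact E.flip0.flip1.S1 hd hc hb ha
  · exact E.S0 ha hb hc hd
end

section
/- Product Ramsey Theorem: for every 4-tuple (r,t,k,m) of positive integers with m ≥ k, there is a positive integer n_0 ≥ k such that the following holds. Whenever X_1, X_2, …, X_t are finite sets with |X_i| ≥ n_0 for every i, and φ is a function assigning to each k^t-grid g in X_1 × X_2 × ⋯ × X_t a color φ(g) from a set R of r colors, then there exist a color α ∈ R and, for each j = 1, 2, …, t, an m-element subset H_j ⊆ X_j, such that φ(g) = α for every k^t-grid g in H_1 × H_2 × ⋯ × H_t. -/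
open Finset

/-- Hypergraph Ramsey statement for `k`-subsets, over any linearly ordered type. -/
def RS (k : ℕ) : Prop :=
  ∀ r m : ℕ, ∃ n : ℕ, ∀ (γ : Type) (_ : LinearOrder γ) (V : Finset γ), n ≤ V.card →
    ∀ (R : Type) (_ : Fintype R) (_ : Nonempty R), Fintype.card R ≤ r →
    ∀ c : Finset γ → R, ∃ a : R, ∃ H : Finset γ, H ⊆ V ∧ H.card = m ∧
      ∀ T : Finset γ, T ⊆ H → T.card = k → c T = a

lemma rs_zero : RS 0 := by
  intro r m
  refine ⟨m, fun γ lo V hV R iR nR hR c => ?_⟩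
  obtain ⟨H, hHV, hHcard⟩ := exists_subset_card_eq hV
  refine ⟨c ∅, H, hHV, hHcard, fun T _ hT => ?_⟩
  rw [Finset.card_eq_zero.mp hT]

/-- Pre-homogeneous sets: the colour of a `(k+1)`-set depends only on its minimum. -/
lemma preHom (k r : ℕ) (ih : RS k) :
    ∀ s : ℕ, ∃ n : ℕ, ∀ (γ : Type) (lo : LinearOrder γ) (V : Finset γ), n ≤ V.card →
      ∀ (R : Type) (iR : Fintype R) (nR : Nonempty R), Fintype.card R ≤ r →
      ∀ c : Finset γ → R, ∃ A : Finset γ, A ⊆ V ∧ A.card = s ∧ ∃ d : γ → R,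
        ∀ x ∈ A, ∀ T : Finset γ, T ⊆ A → T.card = k → (∀ y ∈ T, x < y) →
          c (insert x T) = d x := by
  intro s
  induction s with
  | zero =>
      refine ⟨0, fun γ lo V hV R iR nR hR c => ⟨∅, empty_subset _, card_empty, ?_⟩⟩
      exact ⟨fun _ => nR.some, by simp⟩
  | succ s ihs =>
      obtain ⟨ns, hs⟩ := ihs
      obtain ⟨N, hN⟩ := ih r ns
      refine ⟨N + 1, fun γ lo V hV R iR nR hR c => ?_⟩
      classical
      have hVne : V.Nonempty := card_pos.mp (by omega)
      set x := V.min' hVne with hx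
      have hxV : x ∈ V := V.min'_mem hVne
      have hV' : N ≤ (V.erase x).card := by
        rw [card_erase_of_mem hxV]; omega
      obtain ⟨a, H', hH'V, hH'card, hH'mono⟩ :=
        hN γ lo (V.erase x) hV' R iR nR hR (fun T => c (insert x T))
      obtain ⟨A', hA'H', hA'card, d', hd'⟩ :=
        hs γ lo H' (le_of_eq hH'card.symm) R iR nR hR c
      have hxA' : x ∉ A' := fun hmem =>
        (Finset.mem_erase.mp (hH'V (hA'H' hmem))).1 rfl
      refine ⟨insert x A', ?_, ?_, fun y => if y = x then a else d' y, ?_⟩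
      · intro z hz
        rcases Finset.mem_insert.mp hz with h | h
        · exact h ▸ hxV
        · exact (Finset.erase_subset _ _) (hH'V (hA'H' h))
      · rw [card_insert_of_notMem hxA', hA'card]
      · intro z hz T hTA hTcard hTgt
        rcases Finset.mem_insert.mp hz with h | h
        · subst h
          have hTA' : T ⊆ A' := by
            intro y hy
            rcases Finset.mem_insert.mp (hTA hy) with h' | h'
            · exact absurd (h' ▸ hTgt y hy) (lt_irrefl x)
            · exact h'
          simp only [if_pos rfl]
          exact hH'mono T (hTA'.trans hA'H') hTcard
        · have hzx : z ≠ x := fun h' => hxA' (h' ▸ h)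
          have hTA' : T ⊆ A' := by
            intro y hy
            rcases Finset.mem_insert.mp (hTA hy) with h' | h'
            · exfalso
              have h1 : z < y := hTgt y hy
              have h2 : x ≤ z := V.min'_le z ((Finset.erase_subset _ _) (hH'V (hA'H' h)))
              exact absurd (h' ▸ h1) (not_lt.mpr h2)
            · exact h'
          simp only [if_neg hzx]
          exact hd' z h T hTA' hTcard hTgt

lemma rs_succ (k : ℕ) (ih : RS k) : RS (k + 1) := by
  intro r m
  obtain ⟨n, h⟩ := preHom k r ih (r * (m - 1) + 1)
  refine ⟨n, fun γ lo V hV R iR nR hR c => ?_⟩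
  classical
  obtain ⟨A, hAV, hAcard, d, hd⟩ := h γ lo V hV R iR nR hR c
  have hpig : (Finset.univ : Finset R).card * (m - 1) < A.card := by
    rw [hAcard, Finset.card_univ]
    have : Fintype.card R * (m - 1) ≤ r * (m - 1) := Nat.mul_le_mul_right _ hR
    omega
  obtain ⟨a, -, ha⟩ := Finset.exists_lt_card_fiber_of_mul_lt_card_of_maps_to
    (fun x _ => Finset.mem_univ (d x)) hpig
  have hm : m ≤ (A.filter fun x => d x = a).card := by omega
  obtain ⟨H, hHf, hHcard⟩ := exists_subset_card_eq hm
  refine ⟨a, H, fun y hy => hAV (Finset.mem_filter.mp (hHf hy)).1, hHcard, ?_⟩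
  intro T hTH hTcard
  have hTne : T.Nonempty := card_pos.mp (by omega)
  set x := T.min' hTne with hx
  have hxT : x ∈ T := T.min'_mem hTne
  have hxH : x ∈ H := hTH hxT
  have hxA : x ∈ A := (Finset.mem_filter.mp (hHf hxH)).1
  have hdx : d x = a := (Finset.mem_filter.mp (hHf hxH)).2
  have hins : insert x (T.erase x) = T := Finset.insert_erase hxT
  have hsub : T.erase x ⊆ A := fun y hy =>
    (Finset.mem_filter.mp (hHf (hTH ((Finset.erase_subset _ _) hy)))).1
  have hcard' : (T.erase x).card = k := by
    rw [card_erase_of_mem hxT, hTcard]; omega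
  have hgt : ∀ y ∈ T.erase x, x < y := fun y hy => by
    have := Finset.mem_erase.mp hy
    exact lt_of_le_of_ne (T.min'_le y this.2) (Ne.symm this.1)
  calc c T = c (insert x (T.erase x)) := by rw [hins]
    _ = d x := hd x hxA (T.erase x) hsub hcard' hgt
    _ = a := hdx

lemma rs_all (k : ℕ) : RS k := by
  induction k with
  | zero => exact rs_zero
  | succ k ih => exact rs_succ k ih

/-- Ramsey over arbitrary types, via a well-ordering. -/
lemma ramseyType (k m r : ℕ) :
    ∃ n : ℕ, ∀ (γ : Type) (X : Finset γ), n ≤ X.card →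
      ∀ (R : Type) (iR : Fintype R) (nR : Nonempty R), Fintype.card R ≤ r →
      ∀ φ : Finset γ → R, ∃ a : R, ∃ H : Finset γ, H ⊆ X ∧ H.card = m ∧
        ∀ T : Finset γ, T ⊆ H → T.card = k → φ T = a := by
  obtain ⟨n, h⟩ := rs_all k r m
  refine ⟨n, fun γ X hX R iR nR hR φ => ?_⟩
  letI lo : LinearOrder γ := IsWellOrder.linearOrder WellOrderingRel
  exact h γ lo X hX R iR nR hR φ

lemma productAux (t k m r : ℕ) (hkm : k ≤ m) :
    ∃ n : ℕ, ∀ (γ : Fin t → Type) (X : ∀ i, Finset (γ i)),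
      (∀ i, n ≤ (X i).card) →
      ∀ (R : Type) (iR : Fintype R) (nR : Nonempty R), Fintype.card R ≤ r →
      ∀ φ : (∀ i, Finset (γ i)) → R,
        ∃ a : R, ∃ H : ∀ i, Finset (γ i),
          (∀ i, H i ⊆ X i ∧ (H i).card = m) ∧
          ∀ T : ∀ i, Finset (γ i), (∀ i, T i ⊆ H i ∧ (T i).card = k) → φ T = a := by
  induction t with
  | zero =>
      refine ⟨0, fun γ X hX R iR nR hR φ => ?_⟩
      refine ⟨φ (fun i => i.elim0), fun i => i.elim0, fun i => i.elim0, fun T _ => ?_⟩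
      congr 1
      funext i
      exact i.elim0
  | succ t ih =>
      obtain ⟨n₁, h₁⟩ := ih
      obtain ⟨n₂, h₂⟩ := ramseyType k m (r ^ (2 ^ n₁) ^ t)
      refine ⟨max n₁ n₂, fun γ X hX R iR nR hR φ => ?_⟩
      classical
      -- shrink the first `t` coordinates to exactly `n₁` elements
      have hYex : ∀ i : Fin t, ∃ Y : Finset (γ i.castSucc),
          Y ⊆ X i.castSucc ∧ Y.card = n₁ := fun i => by
        obtain ⟨Y, hY1, hY2⟩ := exists_subset_card_eq
          (le_trans (le_max_left n₁ n₂) (hX i.castSucc))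
        exact ⟨Y, hY1, hY2⟩
      choose Y hYsub hYcard using hYex
      -- the finite type of "grids" in the shrunken sets
      set G := (∀ i : Fin t, ↥((Y i).powerset)) with hG
      have hGcard : Fintype.card G = (2 ^ n₁) ^ t := by
        show Fintype.card (∀ i : Fin t, ↥((Y i).powerset)) = (2 ^ n₁) ^ t
        rw [Fintype.card_pi]
        have : ∀ i : Fin t, Fintype.card ↥((Y i).powerset) = 2 ^ n₁ := fun i => by
          rw [Fintype.card_coe, Finset.card_powerset, hYcard]
        rw [Finset.prod_congr rfl (fun i _ => this i), Finset.prod_const,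
          Finset.card_univ, Fintype.card_fin]
      have hGRcard : Fintype.card (G → R) ≤ r ^ (2 ^ n₁) ^ t := by
        rw [Fintype.card_fun, hGcard]
        exact Nat.pow_le_pow_left hR _
      -- colour k-subsets of the last coordinate
      set c : Finset (γ (Fin.last t)) → (G → R) :=
        fun T g => φ (fun i => Fin.lastCases T (fun j => ((g j : Finset _))) i) with hc
      obtain ⟨a', Hl, hHlX, hHlcard, hHlmono⟩ :=
        h₂ (γ (Fin.last t)) (X (Fin.last t))
          (le_trans (le_max_right n₁ n₂) (hX (Fin.last t)))
          (G → R) inferInstance inferInstance hGRcard c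
      -- a fixed k-subset of Hl
      obtain ⟨T₀, hT₀sub, hT₀card⟩ := exists_subset_card_eq (hHlcard ▸ hkm)
      -- colouring of grids in the first t coordinates
      set ψ : (∀ i : Fin t, Finset (γ i.castSucc)) → R :=
        fun g => φ (fun i => Fin.lastCases T₀ g i) with hψ
      obtain ⟨a, H', hH', hH'mono⟩ :=
        h₁ (fun i => γ i.castSucc) Y (fun i => le_of_eq (hYcard i).symm)
          R iR nR hR ψ
      refine ⟨a, fun i => Fin.lastCases Hl H' i, ?_, ?_⟩
      · intro i
        refine Fin.lastCases ?_ ?_ i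
        · simpa using ⟨hHlX, hHlcard⟩
        · intro j
          simp only [Fin.lastCases_castSucc]
          exact ⟨(hH' j).1.trans (hYsub j), (hH' j).2⟩
      · intro T hT
        set g : ∀ j : Fin t, Finset (γ j.castSucc) := fun j => T j.castSucc with hg
        have hgH : ∀ j, g j ⊆ H' j ∧ (g j).card = k := fun j => by
          have := hT j.castSucc
          simpa [hg] using this
        have hTl : T (Fin.last t) ⊆ Hl ∧ (T (Fin.last t)).card = k := by
          have := hT (Fin.last t)
          simpa using this
        set g' : G := fun j => ⟨g j, Finset.mem_powerset.mpr ((hgH j).1.trans (hH' j).1)⟩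
          with hg'
        have key1 : φ T = c (T (Fin.last t)) g' := by
          rw [hc]
          congr 1
          funext i
          refine Fin.lastCases ?_ ?_ i
          · simp
          · intro j
            simp [hg', hg]
        have key2 : c (T (Fin.last t)) g' = a' g' :=
          congrFun (hHlmono _ hTl.1 hTl.2) g'
        have key3 : c T₀ g' = a' g' := congrFun (hHlmono _ hT₀sub hT₀card) g'
        have key4 : c T₀ g' = ψ g := rfl
        have key5 : ψ g = a := hH'mono g (fun j => ⟨(hgH j).1, (hgH j).2⟩)
        rw [key1, key2, ← key3, key4, key5]

/-- The Product Ramsey Theorem (a `k^t`-grid is encoded by its factors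
`T : ∀ i, Finset (γ i)` with `T i ⊆ X i` and `(T i).card = k`). -/
theorem productRamsey (r t k m : ℕ) (hr : 0 < r) (ht : 0 < t) (hk : 0 < k) (hm : 0 < m)
    (hkm : k ≤ m) :
    ∃ n₀ : ℕ, k ≤ n₀ ∧
      ∀ (γ : Fin t → Type) (X : ∀ i, Finset (γ i)),
        (∀ i, n₀ ≤ (X i).card) →
        ∀ (R : Type) (_ : Fintype R), Fintype.card R = r →
          ∀ φ : (∀ i, Finset (γ i)) → R,
            ∃ (c : R) (H : ∀ i, Finset (γ i)),
              (∀ i, H i ⊆ X i ∧ (H i).card = m) ∧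
              ∀ T : ∀ i, Finset (γ i),
                (∀ i, T i ⊆ H i ∧ (T i).card = k) → φ T = c := by
  obtain ⟨n, h⟩ := productAux t k m r hkm
  refine ⟨max n k, le_max_right n k, fun γ X hX R iR hcard φ => ?_⟩
  have nR : Nonempty R := Fintype.card_pos_iff.mp (hcard ▸ hr)
  exact h γ X (fun i => le_trans (le_max_left n k) (hX i)) R iR nR (le_of_eq hcard) φ
end
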